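/- arXiv:1812.09715 — 4 statements merged into one kernel-verified Lean document; each statement's English description precedes it below -/
import Mathlib

section
/- Proposition 5.7 (stabilisers and the kernel). Let (X,Y) be a G-composite projection graph with modified distances and BGIT constant C, equipped with a composite rotating family with rotating control Θ_rot satisfying the transfer property and the Greendlinger shortening property with constant Θ_short = (Θ_rot − Θ_0)/2 − 2Θ_0 − 3κ, and assume 3Θ_rot/10 > 2C + 3κ + 5Θ_0/2; let N = ⟨Γ_x : x ∈ Y⟩. Then for every vertex v of X: Stab_G(v) ∩ N = ⟨ Γ_w ∩ Stab_G(v) : w ∈ Y ⟩ = ⟨ Γ_w : w ∈ Y ∖ Act(v) ⟩. -/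
/-- A composite projection system with modified distances on a set `Y` partitioned into
`m` pieces (given by the colouring `col : Y → Fin m`), acted on by a group `G`
by isomorphisms of the system. -/
structure CPS (G : Type) (Y : Type) [Group G] [MulAction G Y] (m : ℕ) : Type where
  /-- the piece (colour) of a point -/
  col : Y → Fin m
  /-- the active set of a point -/
  Act : Y → Set Y
  /-- the projection distance `d^π_y(x,z)` (meaningful when `x, z ∈ Act(y) \ {y}`) -/
  dpi : Y → Y → Y → ℝ
  /-- the modified distance `d_y(x,z)` (meaningful when `x, y, z` lie in one piece) -/
  dmod : Y → Y → Y → ℝ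
  theta : ℝ
  Theta : ℝ
  kappa : ℝ
  theta_pos : 0 < theta
  Theta_pos : 0 < Theta
  kappa_pos : 0 < kappa
  act_piece : ∀ x y : Y, col x = col y → x ∈ Act y
  act_symm : ∀ x y : Y, x ∈ Act y ↔ y ∈ Act x
  dpi_nonneg : ∀ y x z : Y, 0 ≤ dpi y x z
  dpi_symm : ∀ y x z : Y, x ∈ Act y → z ∈ Act y → x ≠ y → z ≠ y → dpi y x z = dpi y z x
  dpi_tri : ∀ y w x z : Y, w ∈ Act y → x ∈ Act y → z ∈ Act y → w ≠ y → x ≠ y → z ≠ y →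
    dpi y w x ≤ dpi y w z + dpi y z x
  behrstock : ∀ x y z : Y, x ∈ Act y → z ∈ Act y → x ≠ y → z ≠ y →
    x ∈ Act z → y ∈ Act z → x ≠ z → y ≠ z → min (dpi y x z) (dpi z x y) ≤ theta
  dpi_proper : ∀ x z : Y, col x = col z →
    {y : Y | col y = col x ∧ x ∈ Act y ∧ z ∈ Act y ∧ x ≠ y ∧ z ≠ y ∧ theta ≤ dpi y x z}.Finite
  separation : ∀ y z : Y, z ∈ Act y → z ≠ y → dpi y z z < theta
  inaction : ∀ x z y : Y, x ∉ Act z → x ∈ Act y → z ∈ Act y → x ≠ y → z ≠ y → dpi y x z ≤ theta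
  finite_filling : ∀ Z : Set Y, ∃ F : Finset Y, ↑F ⊆ Z ∧
    (⋃ x ∈ Z, Act x) ⊆ ⋃ x ∈ (F : Set Y), Act x
  dmod_nonneg : ∀ y x z : Y, 0 ≤ dmod y x z
  dmod_symm : ∀ y x z : Y, col x = col y → col z = col y → x ≠ y → z ≠ y →
    dmod y x z = dmod y z x
  dmod_le_dpi : ∀ y x z : Y, col x = col y → col z = col y → x ≠ y → z ≠ y → x ≠ z →
    dpi y x z - kappa ≤ dmod y x z ∧ dmod y x z ≤ dpi y x z
  dmod_tri : ∀ y x z w : Y, col x = col y → col z = col y → col w = col y →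
    x ≠ y → z ≠ y → w ≠ y → x ≠ z → x ≠ w → z ≠ w →
    dmod y x z - kappa ≤ dmod y x w + dmod y z w
  dmod_min : ∀ x y z : Y, col x = col y → col z = col y → x ≠ y → x ≠ z → y ≠ z →
    min (dmod y x z) (dmod x y z) ≤ kappa
  dmod_mono : ∀ w x y z : Y, col x = col w → col y = col w → col z = col w →
    x ≠ w → y ≠ w → z ≠ w → x ≠ y → x ≠ z → y ≠ z →
    Theta ≤ dmod y x z → dmod w x y ≤ dmod w x z ∧ dmod w y z ≤ dmod w x z
  dmod_proper : ∀ x z : Y, col x = col z → x ≠ z →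
    {y : Y | col y = col x ∧ y ≠ x ∧ y ≠ z ∧ Theta ≤ dmod y x z}.Finite
  smul_col : ∀ (g : G) (x y : Y), col x = col y → col (g • x) = col (g • y)
  smul_act : ∀ (g : G) (x y : Y), x ∈ Act y → (g • x) ∈ Act (g • y)
  smul_dang : ∀ (g : G) (y x z : Y), x ∈ Act y → z ∈ Act y → x ≠ y → z ≠ y →
    (if col (g • x) = col (g • y) ∧ col (g • z) = col (g • y)
      then dmod (g • y) (g • x) (g • z) else dpi (g • y) (g • x) (g • z)) =
    (if col x = col y ∧ col z = col y then dmod y x z else dpi y x z)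

namespace CPS

variable {G Y : Type} [Group G] [MulAction G Y] {m : ℕ}

/-- `S.Dfnd y x z` : the projection distance `d^⦟_y(x,z)` is defined,
i.e. `x, z ∈ Act(y) \ {y}`. -/
def Dfnd (S : CPS G Y m) (y x z : Y) : Prop :=
  x ∈ S.Act y ∧ z ∈ S.Act y ∧ x ≠ y ∧ z ≠ y

/-- The projection distance `d^⦟_y(x,z)`: the modified distance if `x, y, z` all lie in the
same piece, and `d^π_y(x,z)` otherwise. -/
def dang (S : CPS G Y m) (y x z : Y) : ℝ :=
  if S.col x = S.col y ∧ S.col z = S.col y then S.dmod y x z else S.dpi y x z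

/-- The constant `Θ₀ = 2Θ + 3κ`. -/
def Th0 (S : CPS G Y m) : ℝ := 2 * S.Theta + 3 * S.kappa

end CPS

/-- A composite rotating family with rotating control `Θrot` on a composite projection
system acted on by `G`. -/
structure CRF {G Y : Type} [Group G] [MulAction G Y] {m : ℕ} (S : CPS G Y m) : Type where
  /-- the rotation subgroups -/
  Γ : Y → Subgroup G
  /-- the rotating control -/
  Throt : ℝ
  Throt_pos : 0 < Throt
  stab : ∀ x : Y, ∀ γ ∈ Γ x, γ • x = x
  infinite : ∀ x : Y, (Γ x : Set G).Infinite
  rot_fix : ∀ x y : Y, (y = x ∨ y ∉ S.Act x) → ∀ γ ∈ Γ x, γ • y = y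
  rot_fix_dang : ∀ x y : Y, (y = x ∨ y ∉ S.Act x) → ∀ γ ∈ Γ x, ∀ u v : Y,
    S.Dfnd y u v → S.dang y (γ • u) (γ • v) = S.dang y u v
  proper_isotropy : ∀ (R : ℝ) (x y : Y), y ∈ S.Act x → y ≠ x →
    {γ : G | γ ∈ Γ x ∧ S.dang x y (γ • y) < R}.Finite
  conj : ∀ (g : G) (x : Y) (γ : G), γ ∈ Γ x ↔ g * γ * g⁻¹ ∈ Γ (g • x)
  comm : ∀ x z : Y, x ∉ S.Act z → ∀ a ∈ Γ x, ∀ b ∈ Γ z, a * b = b * a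
  large_rot : ∀ x y z : Y, S.col x = S.col y → S.col z = S.col y → x ≠ y → z ≠ y →
    S.dmod y x z ≤ S.Theta → ∀ γ ∈ Γ y, γ ≠ 1 → Throt ≤ S.dmod y x (γ • z)

namespace CRF

variable {G Y : Type} [Group G] [MulAction G Y] {m : ℕ} {S : CPS G Y m}

/-- The kernel `N = ⟨Γ_x : x ∈ Y⟩`. -/
def N (R : CRF S) : Subgroup G := Subgroup.closure (⋃ x : Y, (R.Γ x : Set G))

/-- The Greendlinger shortening property with constant `Θshort`: there is a complexity
function on `N` with values in a well-ordered set (the ordinals), attaining its minimum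
exactly at `1`, which can be lowered by a suitable large rotation. -/
def Greendlinger (R : CRF S) (Θshort : ℝ) : Prop :=
  ∃ c : G → Ordinal.{0},
    (∀ γ ∈ R.N, γ ≠ (1 : G) → c 1 < c γ) ∧
    (∀ γ ∈ R.N, γ ≠ (1 : G) → ∀ x : Y, ∃ s : Y, ∃ γs ∈ R.Γ s,
      c (γs * γ) < c γ ∧
      (x ∉ S.Act s ∨ (x ∈ S.Act s ∧ γ • x ∈ S.Act s ∧ x ≠ s ∧ γ • x ≠ s ∧
        Θshort < S.dang s x (γ • x))))

/-- `xt` is a transfer point for `x` in the piece `i`. -/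
def IsTransferPt (R : CRF S) (x : Y) (i : Fin m) (xt : Y) : Prop :=
  S.col xt = i ∧
  (∀ γ ∈ R.Γ x, ∀ z : Y, S.col z = i → S.Dfnd z (γ • xt) xt →
    S.dang z (γ • xt) xt ≤ S.Th0) ∧
  (∀ y : Y, S.col y = i → y ∈ S.Act x →
    {γ : G | γ ∈ R.Γ x ∧ ¬ S.dang y x (γ • xt) ≤ S.kappa}.Finite) ∧
  (∃ γ ∈ R.Γ x, ∀ y : Y, S.col y = i → y ∈ S.Act x →
    S.dang y x (γ • xt) ≤ S.kappa ∨ S.dang y x xt ≤ S.kappa)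

/-- The transfer property (Transfer Lemma): every point has a transfer point in
every piece. -/
def Transfer (R : CRF S) : Prop := ∀ (x : Y) (i : Fin m), ∃ xt : Y, R.IsTransferPt x i xt

end CRF

/-- A walk in a graph is a geodesic if its length realises the graph distance between
its endpoints. -/
def IsGeodesic {V : Type} (X : SimpleGraph V) {a b : V} (w : X.Walk a b) : Prop :=
  w.length = X.dist a b

/-- Every geodesic triangle is δ-slim: each side is contained in the δ-neighbourhood of
the union of the other two sides. -/
def SlimTriangles {V : Type} (X : SimpleGraph V) (δ : ℝ) : Prop :=
  ∀ (a b c : V) (w₁ : X.Walk a b) (w₂ : X.Walk b c) (w₃ : X.Walk a c),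
    IsGeodesic X w₁ → IsGeodesic X w₂ → IsGeodesic X w₃ →
    ∀ v ∈ w₁.support, ∃ u : V, (u ∈ w₂.support ∨ u ∈ w₃.support) ∧ (X.dist v u : ℝ) ≤ δ

/-- The quotient graph of a graph by a group action: vertices are the orbits, and two
distinct orbits are adjacent iff they have adjacent representatives. -/
def quotGraph (H : Type) [Group H] {V : Type} [MulAction H V] (X : SimpleGraph V) :
    SimpleGraph (Quotient (MulAction.orbitRel H V)) where
  Adj a b := a ≠ b ∧ ∃ x y : V, Quotient.mk (MulAction.orbitRel H V) x = a ∧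
    Quotient.mk (MulAction.orbitRel H V) y = b ∧ X.Adj x y
  symm := by
    constructor
    rintro a b ⟨hab, x, y, hx, hy, hxy⟩
    exact ⟨hab.symm, y, x, hy, hx, hxy.symm⟩
  loopless := by
    constructor
    rintro a ⟨hab, -⟩
    exact hab rfl

/-- The quotient map from a graph to its quotient by a group action. -/
def qmap (H : Type) [Group H] {V : Type} [MulAction H V] (v : V) :
    Quotient (MulAction.orbitRel H V) := Quotient.mk _ v

section GraphDefs

variable {G Y : Type} [Group G] [MulAction G Y] {m : ℕ}

/-- The bounded geodesic image property with constant `C`. -/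
def BGIT (S : CPS G Y m) (X : SimpleGraph Y) (C : ℝ) : Prop :=
  ∀ s x z : Y, S.col x = S.col s → S.col z = S.col s → x ≠ s → z ≠ s →
    C < S.dmod s x z → ∀ w : X.Walk x z, IsGeodesic X w → ∃ v ∈ w.support, X.dist v s = 1

/-- `G` acts on the graph `X` by graph automorphisms. -/
def GraphEquiv (G : Type) [Group G] {Y : Type} [MulAction G Y] (X : SimpleGraph Y) : Prop :=
  ∀ (g : G) (x y : Y), X.Adj x y → X.Adj (g • x) (g • y)

/-- Each rotation subgroup fixes every vertex adjacent to its apex. -/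
def FixNbrs {S : CPS G Y m} (R : CRF S) (X : SimpleGraph Y) : Prop :=
  ∀ s v : Y, X.Adj v s → ∀ γ ∈ R.Γ s, γ • v = v

/-- `g` is loxodromic on `X`. -/
def IsLox (X : SimpleGraph Y) (g : G) : Prop :=
  ∃ (x₀ : Y) (lam : ℝ), 0 < lam ∧ ∀ n : ℤ, lam * |(n : ℝ)| ≤ (X.dist x₀ (g ^ n • x₀) : ℝ)

/-- `g` is WPD for the action of `G` on `X`. -/
def IsWPD (X : SimpleGraph Y) (g : G) : Prop :=
  ∀ (x₀ : Y) (r : ℝ), 0 ≤ r → ∃ n₀ : ℕ, ∀ n : ℕ, n₀ ≤ n →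
    {h : G | (X.dist x₀ (h • x₀) : ℝ) ≤ r ∧
      (X.dist (g ^ n • x₀) ((h * g ^ n) • x₀) : ℝ) ≤ r}.Finite

/-- `φ` and `ψ` are independent loxodromic elements with respect to `x₀`. -/
def Indep (X : SimpleGraph Y) (φ ψ : G) (x₀ : Y) : Prop :=
  ∀ R : ℝ, {p : ℤ × ℤ | (X.dist (φ ^ p.1 • x₀) (ψ ^ p.2 • x₀) : ℝ) ≤ R}.Finite

/-- The image of `g` in `G/N` is loxodromic on `X/N`. -/
def IsLoxQuot (N : Subgroup G) (X : SimpleGraph Y) (g : G) : Prop :=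
  ∃ (x₀ : Y) (lam : ℝ), 0 < lam ∧ ∀ n : ℤ, lam * |(n : ℝ)| ≤
    ((quotGraph ↥N X).dist (qmap ↥N x₀) (qmap ↥N (g ^ n • x₀)) : ℝ)

/-- The image of `g` in `G/N` is WPD for the action of `G/N` on `X/N`. -/
def IsWPDQuot (N : Subgroup G) (X : SimpleGraph Y) (g : G) : Prop :=
  ∀ (x₀ : Y) (r : ℝ), 0 ≤ r → ∃ n₀ : ℕ, ∀ n : ℕ, n₀ ≤ n →
    {hbar : G ⧸ N | ∃ h : G, (QuotientGroup.mk h : G ⧸ N) = hbar ∧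
      ((quotGraph ↥N X).dist (qmap ↥N x₀) (qmap ↥N (h • x₀)) : ℝ) ≤ r ∧
      ((quotGraph ↥N X).dist (qmap ↥N (g ^ n • x₀))
        (qmap ↥N ((h * g ^ n) • x₀)) : ℝ) ≤ r}.Finite

/-- The images of `φ` and `ψ` in `G/N` are independent with respect to the image
of `x₀` in `X/N`. -/
def QuotIndep (N : Subgroup G) (X : SimpleGraph Y) (φ ψ : G) (x₀ : Y) : Prop :=
  ∀ R : ℝ, {p : ℤ × ℤ | ((quotGraph ↥N X).dist (qmap ↥N (φ ^ p.1 • x₀))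
    (qmap ↥N (ψ ^ p.2 • x₀)) : ℝ) ≤ R}.Finite

/-- The action of `G/N` on `X/N` is non-elementary: it admits two independent
loxodromic elements. -/
def NonElemQuot (N : Subgroup G) (X : SimpleGraph Y) : Prop :=
  ∃ (φ ψ : G) (x₀ : Y), IsLoxQuot N X φ ∧ IsLoxQuot N X ψ ∧ QuotIndep N X φ ψ x₀

end GraphDefs

/-! Let `g ∈ Stab(v) ∩ N` be nontrivial and apply the Greendlinger shortening property at the
point `x = v`. Its second alternative would need `d^⦟_s(v, v) > Θ_short`, which cannot happen:
in the piece of `v` the bounded geodesic image property applied to the trivial geodesic at `v`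
would make `v` adjacent to `s`, hence fixed by the infinite group `Γ_s`, against properness of
the isotropy; in another piece a transfer point for `v` has a `Γ_v`-translate `z` with
`d^π_s(v, z) ≤ κ`, so `d^π_s(v, v) ≤ 2κ`. Hence the shortening rotation `γ_s` has `v ∉ Act(s)`,
so it fixes `v` and lies in `⟨Γ_w : w ∉ Act(v)⟩`, and induction on the complexity concludes. -/

namespace CPS

variable {G Y : Type} [Group G] [MulAction G Y] {m : ℕ} (S : CPS G Y m)

theorem dang_eq_dpi_of_col_ne {s x : Y} (hx : S.col x ≠ S.col s) (z : Y) :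
    S.dang s x z = S.dpi s x z :=
  if_neg fun h => hx h.1

theorem dang_self_eq_dmod {s x : Y} (hx : S.col x = S.col s) : S.dang s x x = S.dmod s x x :=
  if_pos ⟨hx, hx⟩

theorem dpi_self_le_two_mul {s v z : Y} {r : ℝ} (hv : v ∈ S.Act s) (hz : z ∈ S.Act s)
    (hvs : v ≠ s) (hzs : z ≠ s) (hvz : S.dpi s v z ≤ r) : S.dpi s v v ≤ 2 * r := by
  have htri := S.dpi_tri s v v z hv hv hz hvs hvs hzs
  rw [S.dpi_symm s z v hz hv hzs hvs] at htri
  linarith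

end CPS

namespace CRF

variable {G Y : Type} [Group G] [MulAction G Y] {m : ℕ} {S : CPS G Y m} (R : CRF S)

theorem Γ_le_N (x : Y) : R.Γ x ≤ R.N :=
  fun _ hγ => Subgroup.subset_closure (Set.mem_iUnion.mpr ⟨x, hγ⟩)

theorem finite_setOf_smul_eq_self {x s : Y} (hs : s ∈ S.Act x) (hsx : s ≠ x) :
    {γ | γ ∈ R.Γ x ∧ γ • s = s}.Finite :=
  (R.proper_isotropy (S.dang x s s + 1) x s hs hsx).subset fun γ ⟨hγ, hγs⟩ =>
    ⟨hγ, by rw [hγs]; linarith⟩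

theorem finite_setOf_smul_eq {x s : Y} (hs : s ∈ S.Act x) (hsx : s ≠ x) (t : Y) :
    {γ | γ ∈ R.Γ x ∧ γ • t = s}.Finite := by
  rcases Set.eq_empty_or_nonempty {γ | γ ∈ R.Γ x ∧ γ • t = s} with h | ⟨γ₁, hγ₁, hγ₁t⟩
  · rw [h]
    exact Set.finite_empty
  refine ((R.finite_setOf_smul_eq_self hs hsx).preimage
    (mul_left_injective γ₁⁻¹).injOn).subset ?_
  rintro γ ⟨hγ, hγt⟩
  exact ⟨mul_mem hγ (inv_mem hγ₁), by rw [mul_smul, ← hγ₁t, inv_smul_smul, hγt, hγ₁t]⟩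

theorem infinite_setOf_col_smul_eq (x t : Y) :
    {γ | γ ∈ R.Γ x ∧ S.col (γ • t) = S.col t}.Infinite := by
  obtain ⟨c, hc⟩ : ∃ c, {γ | γ ∈ R.Γ x ∧ S.col (γ • t) = c}.Infinite := by
    by_contra! h
    exact R.infinite x ((Set.finite_iUnion h).subset fun γ hγ =>
      Set.mem_iUnion.mpr ⟨_, hγ, rfl⟩)
  obtain ⟨γ₁, hγ₁, hγ₁c⟩ := hc.nonempty
  refine (hc.image (mul_right_injective γ₁⁻¹).injOn).mono ?_
  rintro _ ⟨γ, ⟨hγ, hγc⟩, rfl⟩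
  refine ⟨mul_mem (inv_mem hγ₁) hγ, ?_⟩
  have h := S.smul_col γ₁⁻¹ _ _ (hγc.trans hγ₁c.symm)
  rwa [inv_smul_smul, ← mul_smul] at h

theorem exists_near_of_isTransferPt {v s t : Y} (ht : R.IsTransferPt v (S.col s) t)
    (hs : s ∈ S.Act v) (hsv : s ≠ v) :
    ∃ z, S.col z = S.col s ∧ z ≠ s ∧ S.dang s v z ≤ S.kappa := by
  obtain ⟨htcol, -, hnear, -⟩ := ht
  obtain ⟨γ, ⟨hγ, hγcol⟩, hγgood⟩ := ((R.infinite_setOf_col_smul_eq v t).sdiff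
    ((hnear s rfl hs).union (R.finite_setOf_smul_eq hs hsv t))).nonempty
  simp only [Set.mem_union, Set.mem_ofPred_eq, not_or, not_and, not_not] at hγgood
  exact ⟨γ • t, hγcol.trans htcol, hγgood.2 hγ, hγgood.1 hγ⟩

theorem dpi_self_le_of_transfer (htrans : R.Transfer) {s v : Y} (hv : v ∈ S.Act s)
    (hvs : v ≠ s) (hcol : S.col v ≠ S.col s) : S.dpi s v v ≤ 2 * S.kappa := by
  obtain ⟨t, ht⟩ := htrans v (S.col s)
  obtain ⟨z, hzcol, hzs, hvz⟩ :=
    R.exists_near_of_isTransferPt ht ((S.act_symm s v).mpr hv) hvs.symm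
  rw [S.dang_eq_dpi_of_col_ne hcol] at hvz
  exact S.dpi_self_le_two_mul hv (S.act_piece z s hzcol) hvs hzs hvz

theorem dmod_self_le_of_bgit {X : SimpleGraph Y} {C : ℝ} (hbgit : BGIT S X C)
    (hfix : FixNbrs R X) {s v : Y} (hv : v ∈ S.Act s) (hvs : v ≠ s)
    (hcol : S.col v = S.col s) : S.dmod s v v ≤ C := by
  by_contra! hC
  obtain ⟨u, hu, hus⟩ := hbgit s v v hcol hcol hvs hvs hC .nil (by simp [IsGeodesic])
  rw [SimpleGraph.Walk.support_nil, List.mem_singleton] at hu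
  subst hu
  have hfixed := hfix s u (SimpleGraph.dist_eq_one_iff_adj.mp hus)
  exact R.infinite s ((R.finite_setOf_smul_eq_self hv hvs).subset fun γ hγ =>
    ⟨hγ, hfixed γ hγ⟩)

theorem dang_self_le {X : SimpleGraph Y} {C : ℝ} (htrans : R.Transfer) (hbgit : BGIT S X C)
    (hfix : FixNbrs R X) {s v : Y} (hv : v ∈ S.Act s) (hvs : v ≠ s) :
    S.dang s v v ≤ max C (2 * S.kappa) := by
  by_cases hcol : S.col v = S.col s
  · rw [S.dang_self_eq_dmod hcol]
    exact (R.dmod_self_le_of_bgit hbgit hfix hv hvs hcol).trans (le_max_left _ _)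
  · rw [S.dang_eq_dpi_of_col_ne hcol]
    exact (R.dpi_self_le_of_transfer htrans hv hvs hcol).trans (le_max_right _ _)

theorem stabilizer_inf_N_le_closure_inactive {Θshort : ℝ} (hgreen : R.Greendlinger Θshort)
    {v : Y} (hv : ∀ s, v ∈ S.Act s → v ≠ s → S.dang s v v ≤ Θshort) :
    MulAction.stabilizer G v ⊓ R.N ≤
      Subgroup.closure (⋃ w ∈ {w : Y | w ∉ S.Act v}, (R.Γ w : Set G)) := by
  obtain ⟨c, -, hshort⟩ := hgreen
  intro g
  induction g using (InvImage.wf c wellFounded_lt).induction with | _ g IH => ?_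
  rintro ⟨hgv, hgN⟩
  rcases eq_or_ne g 1 with rfl | hg1
  · exact one_mem _
  obtain ⟨s, γs, hγs, hlt, hvs | ⟨hvs, -, hvs_ne, -, hlarge⟩⟩ := hshort g hgN hg1 v
  · have hγsv : γs ∈ MulAction.stabilizer G v := R.rot_fix s v (Or.inr hvs) γs hγs
    have hγsB : γs ∈ Subgroup.closure (⋃ w ∈ {w : Y | w ∉ S.Act v}, (R.Γ w : Set G)) :=
      Subgroup.subset_closure
        (Set.mem_iUnion₂.mpr ⟨s, fun hs => hvs ((S.act_symm v s).mpr hs), hγs⟩)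
    have hγsg := IH (γs * g) hlt ⟨mul_mem hγsv hgv, mul_mem (R.Γ_le_N s hγs) hgN⟩
    simpa only [inv_mul_cancel_left] using mul_mem (inv_mem hγsB) hγsg
  · rw [MulAction.mem_stabilizer_iff.mp hgv] at hlarge
    exact absurd (hv s hvs hvs_ne) (not_le.mpr hlarge)

theorem closure_inactive_le_closure_inter_stabilizer (v : Y) :
    Subgroup.closure (⋃ w ∈ {w : Y | w ∉ S.Act v}, (R.Γ w : Set G)) ≤
      Subgroup.closure (⋃ w : Y, ((R.Γ w : Set G) ∩ (MulAction.stabilizer G v : Set G))) := by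
  refine Subgroup.closure_mono fun γ hγ => ?_
  obtain ⟨w, hw, hγ⟩ := Set.mem_iUnion₂.mp hγ
  exact Set.mem_iUnion.mpr
    ⟨w, hγ, R.rot_fix w v (Or.inr fun h => hw ((S.act_symm v w).mp h)) γ hγ⟩

theorem closure_inter_stabilizer_le (v : Y) :
    Subgroup.closure (⋃ w : Y, ((R.Γ w : Set G) ∩ (MulAction.stabilizer G v : Set G))) ≤
      MulAction.stabilizer G v ⊓ R.N :=
  (Subgroup.closure_le _).mpr <| Set.iUnion_subset fun w _ ⟨hγ, hγv⟩ => ⟨hγv, R.Γ_le_N w hγ⟩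

end CRF

theorem stabiliser_intersect_kernel_general
    {G Y : Type} [Group G] [MulAction G Y] {m : ℕ}
    (S : CPS G Y m) (R : CRF S) (X : SimpleGraph Y) (C : ℝ)
    (hC : 0 < C)
    (hbgit : BGIT S X C)
    (hfix : FixNbrs R X)
    (hgreen : R.Greendlinger ((R.Throt - S.Th0) / 2 - 2 * S.Th0 - 3 * S.kappa))
    (hbig : 2 * C + 3 * S.kappa + 5 * S.Th0 / 2 < 3 * R.Throt / 10)
    (htrans : R.Transfer)
    (v : Y) :
    MulAction.stabilizer G v ⊓ R.N =
      Subgroup.closure (⋃ w : Y, ((R.Γ w : Set G) ∩ (MulAction.stabilizer G v : Set G))) ∧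
    MulAction.stabilizer G v ⊓ R.N =
      Subgroup.closure (⋃ w ∈ {w : Y | w ∉ S.Act v}, (R.Γ w : Set G)) := by
  have hshort : max C (2 * S.kappa) ≤ (R.Throt - S.Th0) / 2 - 2 * S.Th0 - 3 * S.kappa := by
    have := S.kappa_pos
    have := S.Theta_pos
    simp only [CPS.Th0] at hbig ⊢
    exact max_le (by linarith) (by linarith)
  have hle := R.stabilizer_inf_N_le_closure_inactive (v := v) hgreen fun s hv hvs =>
    (R.dang_self_le htrans hbgit hfix hv hvs).trans hshort
  have h₁ := R.closure_inactive_le_closure_inter_stabilizer v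
  have h₂ := R.closure_inter_stabilizer_le v
  exact ⟨le_antisymm (hle.trans h₁) h₂, le_antisymm hle (h₁.trans h₂)⟩

/-- Proposition 5.7: the intersection of a vertex stabiliser with the kernel N is
generated by the rotation subgroups it contains, namely those with inactive apex. -/
theorem stabiliser_intersect_kernel
    {G Y : Type} [Group G] [MulAction G Y] {m : ℕ}
    (S : CPS G Y m) (R : CRF S) (X : SimpleGraph Y) (δ C : ℝ)
    (hδ : 0 ≤ δ) (hC : 0 < C)
    (hconn : X.Connected)
    (hslim : SlimTriangles X δ)
    (hequiv : GraphEquiv G X)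
    (hbgit : BGIT S X C)
    (hfix : FixNbrs R X)
    (hgreen : R.Greendlinger ((R.Throt - S.Th0) / 2 - 2 * S.Th0 - 3 * S.kappa))
    (hbig : 2 * C + 3 * S.kappa + 5 * S.Th0 / 2 < 3 * R.Throt / 10)
    (htrans : R.Transfer)
    (v : Y) :
    MulAction.stabilizer G v ⊓ R.N =
      Subgroup.closure (⋃ w : Y, ((R.Γ w : Set G) ∩ (MulAction.stabilizer G v : Set G))) ∧
    MulAction.stabilizer G v ⊓ R.N =
      Subgroup.closure (⋃ w ∈ {w : Y | w ∉ S.Act v}, (R.Γ w : Set G)) :=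
  stabiliser_intersect_kernel_general S R X C hC hbgit hfix hgreen hbig htrans v
end

section
/- Corollary 1.5 (large rotations in every coordinate). Let Y be a composite projection system with constant θ and modified distances with constants Θ, κ, acted on by a group G by isomorphisms, equipped with a composite rotating family (Γ_x)_{x∈Y} with rotating control Θ_rot satisfying the transfer property, and set Θ_0 = 2Θ + 3κ. Then for all x, y ∈ Y with x ∈ Act(y) and x ≠ y, and every γ ∈ Γ_y ∖ {1}, one has d^⦟_y(x, γx) ≥ Θ_rot − 2(Θ_0 + 2κ). -/
section AuxCor

variable {G Y : Type} [Group G] [MulAction G Y] {m : ℕ}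

namespace CPS

variable (S : CPS G Y m)

lemma dang_nonneg (y a b : Y) : 0 ≤ S.dang y a b := by
  unfold dang; split_ifs
  · exact S.dmod_nonneg y a b
  · exact S.dpi_nonneg y a b

lemma dang_eq_dmod {y a b : Y} (ha : S.col a = S.col y) (hb : S.col b = S.col y) :
    S.dang y a b = S.dmod y a b := if_pos ⟨ha, hb⟩

lemma dang_eq_dpi {y a b : Y} (h : ¬(S.col a = S.col y ∧ S.col b = S.col y)) :
    S.dang y a b = S.dpi y a b := if_neg h

lemma dfnd_of_col {y a b : Y} (ha : S.col a = S.col y) (hb : S.col b = S.col y)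
    (hay : a ≠ y) (hby : b ≠ y) : S.Dfnd y a b :=
  ⟨S.act_piece a y ha, S.act_piece b y hb, hay, hby⟩

lemma dang_symm {y a b : Y} (h : S.Dfnd y a b) : S.dang y a b = S.dang y b a := by
  obtain ⟨ha, hb, hay, hby⟩ := h
  unfold dang
  by_cases h1 : S.col a = S.col y <;> by_cases h2 : S.col b = S.col y
  · rw [if_pos ⟨h1, h2⟩, if_pos ⟨h2, h1⟩]
    exact S.dmod_symm y a b h1 h2 hay hby
  all_goals rw [if_neg (by tauto), if_neg (by tauto)]
  all_goals exact S.dpi_symm y a b ha hb hay hby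

end CPS

namespace CRF

variable {S : CPS G Y m} (R : CRF S)

lemma col_smul {y a : Y} {γ : G} (hγ : γ ∈ R.Γ y) (ha : S.col a = S.col y) :
    S.col (γ • a) = S.col y := by
  have h := S.smul_col γ a y ha
  rwa [R.stab y γ hγ] at h

lemma col_smul_ne {y a : Y} {γ : G} (hγ : γ ∈ R.Γ y) (ha : S.col a ≠ S.col y) :
    S.col (γ • a) ≠ S.col y := by
  intro h
  apply ha
  have h2 := S.smul_col γ⁻¹ (γ • a) y h
  rw [inv_smul_smul] at h2
  rwa [R.stab y γ⁻¹ (inv_mem hγ)] at h2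

lemma smul_act' {y a : Y} {γ : G} (hγ : γ ∈ R.Γ y) (ha : a ∈ S.Act y) : γ • a ∈ S.Act y := by
  have h := S.smul_act γ a y ha
  rwa [R.stab y γ hγ] at h

lemma smul_ne {y a : Y} {γ : G} (hγ : γ ∈ R.Γ y) (ha : a ≠ y) : γ • a ≠ y := by
  intro h
  apply ha
  have h2 : γ • a = γ • y := by rw [h, R.stab y γ hγ]
  exact MulAction.injective γ h2

lemma dang_smul {y a b : Y} {γ : G} (hγ : γ ∈ R.Γ y) (h : S.Dfnd y a b) :
    S.dang y (γ • a) (γ • b) = S.dang y a b :=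
  R.rot_fix_dang y y (Or.inl rfl) γ hγ a b h

lemma dmod_smul {y a b : Y} {γ : G} (hγ : γ ∈ R.Γ y) (ha : S.col a = S.col y)
    (hb : S.col b = S.col y) (hay : a ≠ y) (hby : b ≠ y) :
    S.dmod y (γ • a) (γ • b) = S.dmod y a b := by
  have h := R.dang_smul hγ (S.dfnd_of_col ha hb hay hby)
  rwa [S.dang_eq_dmod (R.col_smul hγ ha) (R.col_smul hγ hb),
    S.dang_eq_dmod ha hb] at h

/-- Forced rigidity of transfer points in one's own colour, plus (iii):
the diagonal modified distances are bounded by `κ`. -/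
lemma diag_le_kappa (htrans : R.Transfer) {u y' : Y} (h : S.col y' = S.col u) :
    S.dmod y' u u ≤ S.kappa := by
  obtain ⟨t, hcolt, hT2, hT3, hT4⟩ := htrans u (S.col u)
  have htu : t = u := by
    by_contra htu
    have htact : t ∈ S.Act u := S.act_piece t u hcolt
    have hfin := R.proper_isotropy (S.Th0 + 1) u t htact htu
    apply R.infinite u
    apply hfin.subset
    intro γ hγ
    refine ⟨hγ, ?_⟩
    have hact2 : γ • t ∈ S.Act u := by
      have h2 := S.smul_act γ t u htact
      rwa [R.stab u γ hγ] at h2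
    have hne2 : γ • t ≠ u := by
      intro he
      apply htu
      have h3 : t = γ⁻¹ • (γ • t) := (inv_smul_smul γ t).symm
      rw [he] at h3
      rwa [R.stab u γ⁻¹ (inv_mem hγ)] at h3
    have hb := hT2 γ hγ u rfl ⟨hact2, htact, hne2, htu⟩
    have hs := S.dang_symm (y := u) (a := t) (b := γ • t) ⟨htact, hact2, htu, hne2⟩
    rw [hs]
    linarith
  obtain ⟨γ₀, hγ₀, h4⟩ := hT4
  have h5 := h4 y' h (S.act_piece y' u h)
  rw [htu, R.stab u γ₀ hγ₀] at h5
  have h6 : S.dang y' u u ≤ S.kappa := by tauto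
  rwa [S.dang_eq_dmod h.symm h.symm] at h6

lemma stab_finite {v a : Y} (ha : a ∈ S.Act v) (hav : a ≠ v) (b : Y) :
    {g : G | g ∈ R.Γ v ∧ g • a = b}.Finite := by
  rcases Set.eq_empty_or_nonempty {g : G | g ∈ R.Γ v ∧ g • a = b} with he | ⟨g₁, hg₁, hg₁b⟩
  · rw [he]; exact Set.finite_empty
  · have hfin := R.proper_isotropy (S.dang v a a + 1) v a ha hav
    have hsub : {g : G | g ∈ R.Γ v ∧ g • a = b} ⊆
        (fun h => g₁ * h) '' {h : G | h ∈ R.Γ v ∧ S.dang v a (h • a) < S.dang v a a + 1} := by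
      rintro g ⟨hg, hgb⟩
      refine ⟨g₁⁻¹ * g, ⟨mul_mem (inv_mem hg₁) hg, ?_⟩, by group⟩
      have h2 : (g₁⁻¹ * g) • a = a := by
        rw [mul_smul, hgb, ← hg₁b, inv_smul_smul]
      rw [h2]; linarith
    exact ((hfin.image _).subset hsub)

lemma exists_good (v : Y) {F : Set G} (hF : F.Finite) :
    ∃ g : G, g ∈ R.Γ v ∧ g ∉ F := by
  obtain ⟨g, hg, hgF⟩ := ((R.infinite v).diff hF).nonempty
  exact ⟨g, hg, hgF⟩

lemma exists_q (htrans : R.Transfer) {y a : Y} (hcol : S.col a = S.col y) (hane : a ≠ y) :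
    ∃ q : Y, S.col q = S.col y ∧ q ≠ a ∧ q ≠ y ∧ S.dmod a y q ≤ S.kappa := by
  by_contra hq
  push_neg at hq
  have hfin := R.proper_isotropy (S.kappa + 1) y a (S.act_piece a y hcol) hane
  apply R.infinite y
  apply hfin.subset
  intro γ hγ
  refine ⟨hγ, ?_⟩
  by_cases hc : γ • a = a
  · rw [hc, S.dang_eq_dmod hcol hcol]
    have hd := R.diag_le_kappa htrans (u := a) (y' := y) hcol.symm
    linarith
  · have hcolga : S.col (γ • a) = S.col y := R.col_smul hγ hcol
    have hgay : γ • a ≠ y := R.smul_ne hγ hane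
    have hmin := S.dmod_min a y (γ • a) hcol hcolga hane
      (fun h => hc h.symm) (fun h => hgay h.symm)
    have h2 := hq (γ • a) hcolga hc hgay
    rw [S.dang_eq_dmod hcol hcolga]
    rcases min_le_iff.mp hmin with h3 | h3
    · linarith
    · linarith

end CRF

end AuxCor
section AuxCor2

variable {G Y : Type} [Group G] [MulAction G Y] {m : ℕ}

namespace CRF

variable {S : CPS G Y m} (R : CRF S)

/-- The machinery: manufacture a pair `(P, Q)` near the anchor `a` (at apex `y`) with
`dmod y P Q ≤ Θ`, using monotonicity-contrapositive with witness apex `a`. -/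
lemma machinery (htrans : R.Transfer) {y a : Y} (hcol : S.col a = S.col y) (hane : a ≠ y)
    (hW : S.kappa < R.Throt) :
    ∃ P Q : Y, S.col P = S.col y ∧ S.col Q = S.col y ∧ P ≠ y ∧ Q ≠ y ∧ P ≠ a ∧ Q ≠ a ∧ P ≠ Q ∧
      S.dmod y a P ≤ S.kappa ∧ S.dmod y a Q ≤ S.kappa ∧ S.dmod y P Q ≤ S.Theta := by
  have hκ := S.kappa_pos
  obtain ⟨q, hcolq, hqa, hqy, hqκ⟩ := R.exists_q htrans hcol hane
  have hcolya : S.col y = S.col a := hcol.symm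
  have hcolqa : S.col q = S.col a := hcolq.trans hcolya
  have hqact : q ∈ S.Act a := S.act_piece q a hcolqa
  have hyact : y ∈ S.Act a := S.act_piece y a hcolya
  have hya : y ≠ a := Ne.symm hane
  have hF1 := R.proper_isotropy (3 * S.kappa + 1) a q hqact hqa
  have hF2 := R.proper_isotropy R.Throt a y hyact hya
  have hF3 := R.stab_finite hqact hqa y
  have hF4 := R.stab_finite hqact hqa a
  have hF5 := R.stab_finite hyact hya a
  obtain ⟨g, hg, hgbad⟩ := R.exists_good a
    (hF := (((hF1.union hF2).union hF3).union (hF4.union hF5)))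
  simp only [Set.mem_union, Set.mem_setOf_eq, not_or] at hgbad
  obtain ⟨⟨⟨hb1, hb2⟩, hb3⟩, hb4, hb5⟩ := hgbad
  have hq1 : 3 * S.kappa + 1 ≤ S.dang a q (g • q) := by
    by_contra h; push_neg at h; exact hb1 ⟨hg, h⟩
  have hq2 : R.Throt ≤ S.dang a y (g • y) := by
    by_contra h; push_neg at h; exact hb2 ⟨hg, h⟩
  have hq3 : g • q ≠ y := fun h => hb3 ⟨hg, h⟩
  have hq4 : g • q ≠ a := fun h => hb4 ⟨hg, h⟩
  have hq5 : g • y ≠ a := fun h => hb5 ⟨hg, h⟩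
  -- colours of the images
  have hcolP : S.col (g • q) = S.col y := (R.col_smul hg hcolqa).trans hcol
  have hcolQ : S.col (g • y) = S.col y := (R.col_smul hg hcolya).trans hcol
  have hcolPa : S.col (g • q) = S.col a := hcolP.trans hcolya
  have hcolQa : S.col (g • y) = S.col a := hcolQ.trans hcolya
  -- Q ≠ y
  have hQy : g • y ≠ y := by
    intro he
    have hd := R.diag_le_kappa htrans (u := y) (y' := a) hcol
    rw [S.dang_eq_dmod hcolya hcolQa, he] at hq2
    linarith
  -- P ≠ q
  have hPq : g • q ≠ q := by
    intro he
    have hd := R.diag_le_kappa htrans (u := q) (y' := a) hcolqa.symm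
    rw [S.dang_eq_dmod hcolqa hcolPa, he] at hq1
    linarith
  have hPQ : g • q ≠ g • y := fun h => hqy (MulAction.injective g h)
  -- rewritten dmod forms
  have hq1' : 3 * S.kappa + 1 ≤ S.dmod a q (g • q) := by
    rwa [S.dang_eq_dmod hcolqa hcolPa] at hq1
  have hq2' : R.Throt ≤ S.dmod a y (g • y) := by
    rwa [S.dang_eq_dmod hcolya hcolQa] at hq2
  have hda_qy : S.dmod a q y ≤ S.kappa := by
    rw [← S.dmod_symm a y q hcolya hcolqa hya hqa]; exact hqκ
  have hPQa : S.dmod a (g • q) (g • y) ≤ S.kappa := by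
    rw [R.dmod_smul hg hcolqa hcolya hqa hya]; exact hda_qy
  -- F-c : dmod a y (g•q) ≥ κ + 1
  have htriC := S.dmod_tri a q (g • q) y hcolqa hcolPa hcolya hqa hq4 hya
    (Ne.symm hPq) hqy hq3
  have hFc : S.kappa + 1 ≤ S.dmod a (g • q) y := by linarith
  have hFc' : S.kappa + 1 ≤ S.dmod a y (g • q) := by
    rwa [S.dmod_symm a y (g • q) hcolya hcolPa hya hq4]
  -- F-d : dmod y a (g•q) ≤ κ
  have hFd : S.dmod y a (g • q) ≤ S.kappa := by
    have hmin := S.dmod_min a y (g • q) hcol hcolP hane (Ne.symm hq4) (Ne.symm hq3)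
    rcases min_le_iff.mp hmin with h3 | h3
    · exact h3
    · linarith
  -- F-e : dmod y a (g•y) ≤ κ
  have hFe : S.dmod y a (g • y) ≤ S.kappa := by
    have hmin := S.dmod_min a y (g • y) hcol hcolQ hane (Ne.symm hq5) (Ne.symm hQy)
    rcases min_le_iff.mp hmin with h3 | h3
    · exact h3
    · linarith
  -- F-f : dmod y (g•q) (g•y) ≤ Θ
  have hFf : S.dmod y (g • q) (g • y) ≤ S.Theta := by
    by_contra h
    push_neg at h
    have hmono := S.dmod_mono a (g • q) y (g • y) hcolPa hcolya hcolQa hq4 hya hq5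
      hq3 hPQ (Ne.symm hQy) (le_of_lt h)
    have h2 := hmono.2
    linarith
  exact ⟨g • q, g • y, hcolP, hcolQ, hq3, hQy, hq4, hq5, hPQ, hFd, hFe, hFf⟩

/-- Fire the manufactured pair: every nontrivial `γ ∈ Γ_y` displaces any same-colour
anchor `a` by at least `Θrot - 4κ` at apex `y`. -/
lemma fire (htrans : R.Transfer) {y a : Y} (hcol : S.col a = S.col y) (hane : a ≠ y) {γ : G}
    (hγ : γ ∈ R.Γ y) (hγ1 : γ ≠ 1) (hW : 4 * S.kappa < R.Throt) :
    R.Throt - 4 * S.kappa ≤ S.dmod y a (γ • a) ∧ γ • a ≠ a := by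
  have hκ := S.kappa_pos
  have hWκ : S.kappa < R.Throt := by linarith
  obtain ⟨P, Q, hcolP, hcolQ, hPy, hQy, hPa, hQa, hPQ, haP, haQ, hPQΘ⟩ :=
    R.machinery htrans hcol hane hWκ
  have hfire := R.large_rot P y Q hcolP hcolQ hPy hQy hPQΘ γ hγ hγ1
  have hcolγQ : S.col (γ • Q) = S.col y := R.col_smul hγ hcolQ
  have hγQy : γ • Q ≠ y := R.smul_ne hγ hQy
  have hcolγa : S.col (γ • a) = S.col y := R.col_smul hγ hcol
  have hγay : γ • a ≠ y := R.smul_ne hγ hane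
  have hPa' : S.dmod y P a ≤ S.kappa := by
    rw [S.dmod_symm y P a hcolP hcol hPy hane]; exact haP
  have hQa' : S.dmod y Q a ≤ S.kappa := by
    rw [S.dmod_symm y Q a hcolQ hcol hQy hane]; exact haQ
  have hPγQ : P ≠ γ • Q := by
    intro he
    rw [he] at hfire
    have hd := R.diag_le_kappa htrans (u := γ • Q) (y' := y) hcolγQ.symm
    linarith
  have hγQa : γ • Q ≠ a := by
    intro he
    rw [he] at hfire
    linarith
  have hPγa : P ≠ γ • a := by
    intro he
    rw [he] at hfire
    have heq : S.dmod y (γ • a) (γ • Q) = S.dmod y a Q := R.dmod_smul hγ hcol hcolQ hane hQy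
    rw [heq] at hfire
    linarith
  have hγaa : γ • a ≠ a := by
    intro he
    have htri := S.dmod_tri y P (γ • Q) a hcolP hcolγQ hcol hPy hγQy hane hPγQ hPa hγQa
    have h2 : S.dmod y (γ • Q) a = S.dmod y Q a := by
      conv_lhs => rw [← he]
      exact R.dmod_smul hγ hcolQ hcol hQy hane
    linarith
  have hγQγa : γ • Q ≠ γ • a := fun he => hQa (MulAction.injective γ he)
  have htri1 := S.dmod_tri y P (γ • Q) (γ • a) hcolP hcolγQ hcolγa hPy hγQy hγay
    hPγQ hPγa hγQγa
  have heq1 : S.dmod y (γ • Q) (γ • a) = S.dmod y Q a := R.dmod_smul hγ hcolQ hcol hQy hane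
  have htri2 := S.dmod_tri y P (γ • a) a hcolP hcolγa hcol hPy hγay hane hPγa hPa hγaa
  have heq2 : S.dmod y (γ • a) a = S.dmod y a (γ • a) :=
    S.dmod_symm y (γ • a) a hcolγa hcol hγay hane
  constructor
  · linarith
  · exact hγaa

/-- Extract the displacement of `x` (cross colour) from that of a same-colour anchor. -/
lemma extract {y x a : Y} {γ : G} (hγ : γ ∈ R.Γ y) (hact : x ∈ S.Act y) (hne : x ≠ y)
    (hcola : S.col a = S.col y) (hane : a ≠ y) (hxy : S.col x ≠ S.col y)
    (hγa : γ • a ≠ a) {c T : ℝ} (hlink : S.dpi y x a ≤ c) (hdisp : T ≤ S.dmod y a (γ • a)) :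
    T - 2 * c ≤ S.dpi y x (γ • x) := by
  have haact : a ∈ S.Act y := S.act_piece a y hcola
  have hγaact : γ • a ∈ S.Act y := R.smul_act' hγ haact
  have hγxact : γ • x ∈ S.Act y := R.smul_act' hγ hact
  have hγay : γ • a ≠ y := R.smul_ne hγ hane
  have hγxy : γ • x ≠ y := R.smul_ne hγ hne
  have hcolγa : S.col (γ • a) = S.col y := R.col_smul hγ hcola
  have hcolγx : S.col (γ • x) ≠ S.col y := R.col_smul_ne hγ hxy
  have h1 : S.dmod y a (γ • a) ≤ S.dpi y a (γ • a) :=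
    (S.dmod_le_dpi y a (γ • a) hcola hcolγa hane hγay (fun h => hγa h.symm)).2
  have htriA := S.dpi_tri y a (γ • a) x haact hγaact hact hane hγay hne
  have htriB := S.dpi_tri y x (γ • a) (γ • x) hact hγaact hγxact hne hγay hγxy
  have heqv : S.dpi y (γ • x) (γ • a) = S.dpi y x a := by
    have h2 := R.dang_smul hγ (⟨hact, haact, hne, hane⟩ : S.Dfnd y x a)
    rwa [S.dang_eq_dpi (fun hh => hcolγx hh.1), S.dang_eq_dpi (fun hh => hxy hh.1)] at h2
  have hsymm1 : S.dpi y a x = S.dpi y x a := S.dpi_symm y a x haact hact hane hne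
  have hsymm2 : S.dpi y (γ • x) (γ • a) = S.dpi y (γ • a) (γ • x) :=
    S.dpi_symm y (γ • x) (γ • a) hγxact hγaact hγxy hγay
  -- chain
  have : T ≤ S.dpi y x a + (S.dpi y x (γ • x) + S.dpi y x a) := by
    calc T ≤ S.dmod y a (γ • a) := hdisp
    _ ≤ S.dpi y a (γ • a) := h1
    _ ≤ S.dpi y a x + S.dpi y x (γ • a) := htriA
    _ ≤ S.dpi y a x + (S.dpi y x (γ • x) + S.dpi y (γ • x) (γ • a)) := by linarith
    _ = S.dpi y x a + (S.dpi y x (γ • x) + S.dpi y x a) := by rw [hsymm1, heqv]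
  linarith

end CRF

end AuxCor2
section AuxCor3

variable {G Y : Type} [Group G] [MulAction G Y] {m : ℕ}

namespace CRF

variable {S : CPS G Y m} (R : CRF S)

/-- Per-instance analysis: if the conclusion of Corollary 1.5 fails for an instance
`(x, yy, gg)` of cross colour whose transfer point `t` differs from the apex, then the
transfer point is `Θ`-isolated at the apex. -/
lemma instance_hz (htrans : R.Transfer) {x yy t : Y} {gg : G}
    (hact : x ∈ S.Act yy) (hne : x ≠ yy) (hγ : gg ∈ R.Γ yy) (hγ1 : gg ≠ 1)
    (hcol : ¬ S.col x = S.col yy) (hTt : R.IsTransferPt x (S.col yy) t) (hty : t ≠ yy)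
    (hW : 2 * (S.Th0 + 2 * S.kappa) < R.Throt)
    (hfail : S.dang yy x (gg • x) < R.Throt - 2 * (S.Th0 + 2 * S.kappa)) :
    ∀ z, S.col z = S.col yy → z ≠ yy → z ≠ t → S.Theta < S.dmod yy t z := by
  have hκ := S.kappa_pos
  have hΘ := S.Theta_pos
  have hTh0v : S.Th0 = 2 * S.Theta + 3 * S.kappa := rfl
  have hW4 : 4 * S.kappa < R.Throt := by linarith
  obtain ⟨hcolt, hT2, hT3, hT4⟩ := hTt
  have hyx : yy ∈ S.Act x := (S.act_symm x yy).mp hact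
  rw [S.dang_eq_dpi (fun hh => hcol hh.1)] at hfail
  have htact : t ∈ S.Act yy := S.act_piece t yy hcolt
  intro z hcolz hzy hzt
  by_contra hzΘ
  push_neg at hzΘ
  by_cases hxt : S.dang yy x t ≤ S.kappa
  · obtain ⟨hdisp, hγt⟩ := R.fire htrans hcolt hty hγ hγ1 hW4
    have hlink : S.dpi yy x t ≤ S.kappa := by
      rwa [S.dang_eq_dpi (fun hh => hcol hh.1)] at hxt
    have hex := R.extract hγ hact hne hcolt hty hcol hγt hlink hdisp
    linarith
  · push_neg at hxt
    have htx : t ∈ S.Act x := by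
      by_contra htx
      apply R.infinite x
      apply (hT3 yy rfl hyx).subset
      intro γ' hγ'
      refine ⟨hγ', ?_⟩
      rw [R.rot_fix x t (Or.inr htx) γ' hγ']
      exact not_le.mpr hxt
    have htnex : t ≠ x := fun h => hcol (h ▸ hcolt)
    have hB1 := hT3 yy rfl hyx
    have hB2 : {γ' : G | γ' ∈ R.Γ x ∧ γ' • t ∉ S.Act yy}.Finite := by
      apply (R.proper_isotropy (S.dpi x t yy + S.theta + 1) x t htx htnex).subset
      rintro γ' ⟨hγ', hnact⟩
      refine ⟨hγ', ?_⟩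
      have hγ't : γ' • t ∈ S.Act x := by
        have h2 := S.smul_act γ' t x htx
        rwa [R.stab x γ' hγ'] at h2
      have hγ'tx : γ' • t ≠ x := by
        intro he
        apply htnex
        have h3 : t = γ'⁻¹ • (γ' • t) := (inv_smul_smul γ' t).symm
        rw [he] at h3
        rwa [R.stab x γ'⁻¹ (inv_mem hγ')] at h3
      have hina := S.inaction (γ' • t) yy x hnact hγ't hyx hγ'tx (Ne.symm hne)
      have htri := S.dpi_tri x t (γ' • t) yy htx hγ't hyx htnex hγ'tx (Ne.symm hne)
      have hsym : S.dpi x yy (γ' • t) = S.dpi x (γ' • t) yy :=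
        S.dpi_symm x yy (γ' • t) hyx hγ't (Ne.symm hne) hγ'tx
      rw [S.dang_eq_dpi (fun hh => hcol (hh.1.symm.trans hcolt))]
      linarith
    have hB3 := R.stab_finite (v := x) (a := t) htx htnex yy
    obtain ⟨γ', hγ', hbad⟩ := R.exists_good x (hF := (hB1.union hB2).union hB3)
    simp only [Set.mem_union, Set.mem_setOf_eq, not_or] at hbad
    obtain ⟨⟨hd1, hd2⟩, hd3⟩ := hbad
    have hv1 : S.dang yy x (γ' • t) ≤ S.kappa := by
      by_contra h; exact hd1 ⟨hγ', h⟩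
    have hv2 : γ' • t ∈ S.Act yy := by
      by_contra h; exact hd2 ⟨hγ', h⟩
    have hv3 : γ' • t ≠ yy := fun h => hd3 ⟨hγ', h⟩
    by_cases hcolv : S.col (γ' • t) = S.col yy
    · obtain ⟨hdisp, hγv⟩ := R.fire htrans hcolv hv3 hγ hγ1 hW4
      have hlink : S.dpi yy x (γ' • t) ≤ S.kappa := by
        rwa [S.dang_eq_dpi (fun hh => hcol hh.1)] at hv1
      have hex := R.extract hγ hact hne hcolv hv3 hcol hγv hlink hdisp
      linarith
    · have hvty : S.dang yy (γ' • t) t ≤ S.Th0 :=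
        hT2 γ' hγ' yy rfl ⟨hv2, htact, hv3, hty⟩
      have hvt : S.dpi yy (γ' • t) t ≤ S.Th0 := by
        rwa [S.dang_eq_dpi (fun hh => hcolv hh.1)] at hvty
      have hxv : S.dpi yy x (γ' • t) ≤ S.kappa := by
        rwa [S.dang_eq_dpi (fun hh => hcol hh.1)] at hv1
      have htrixt := S.dpi_tri yy x t (γ' • t) hact htact hv2 hne hty hv3
      have hlink : S.dpi yy x t ≤ S.kappa + S.Th0 := by linarith
      have hdκ := R.diag_le_kappa htrans (u := t) (y' := yy) hcolt.symm
      by_cases hB1d : R.Throt ≤ S.dmod yy t (gg • t)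
      · have hγt : gg • t ≠ t := by
          intro he
          rw [he] at hB1d
          linarith
        have hex := R.extract hγ hact hne hcolt hty hcol hγt hlink hB1d
        linarith
      · have hdΘ : S.Theta < S.dmod yy t t := by
          by_contra h2
          push_neg at h2
          exact hB1d (R.large_rot t yy t hcolt hcolt hty hty h2 gg hγ hγ1)
        have hΘκ : S.Theta < S.kappa := lt_of_lt_of_le hdΘ hdκ
        have hfire := R.large_rot t yy z hcolt hcolz hty hzy hzΘ gg hγ hγ1
        have hcolγz : S.col (gg • z) = S.col yy := R.col_smul hγ hcolz
        have hcolγt : S.col (gg • t) = S.col yy := R.col_smul hγ hcolt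
        have hγzy : gg • z ≠ yy := R.smul_ne hγ hzy
        have hγty : gg • t ≠ yy := R.smul_ne hγ hty
        have h1 : t ≠ gg • z := by
          intro he; rw [← he] at hfire; linarith
        have h2 : t ≠ gg • t := by
          intro he
          rw [he] at hfire
          rw [R.dmod_smul hγ hcolt hcolz hty hzy] at hfire
          linarith
        have h3 : gg • z ≠ gg • t := fun he => hzt (MulAction.injective gg he)
        have htri := S.dmod_tri yy t (gg • z) (gg • t) hcolt hcolγz hcolγt hty hγzy hγty
          h1 h2 h3
        have heq : S.dmod yy (gg • z) (gg • t) = S.dmod yy z t :=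
          R.dmod_smul hγ hcolz hcolt hzy hty
        have hsz : S.dmod yy z t = S.dmod yy t z := S.dmod_symm yy z t hcolz hcolt hzy hty
        have hdisp : R.Throt - S.Theta - S.kappa ≤ S.dmod yy t (gg • t) := by
          rw [heq, hsz] at htri; linarith
        have hγt : gg • t ≠ t := fun he => h2 he.symm
        have hex := R.extract hγ hact hne hcolt hty hcol hγt hlink hdisp
        linarith

end CRF

end AuxCor3
/-- Corollary 1.5: nontrivial rotations rotate every active point by a large angle. -/
theorem large_rotations_every_coordinate
    {G Y : Type} [Group G] [MulAction G Y] {m : ℕ}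
    (S : CPS G Y m) (R : CRF S)
    (htrans : R.Transfer)
    (x y : Y) (hact : x ∈ S.Act y) (hne : x ≠ y)
    (γ : G) (hγ : γ ∈ R.Γ y) (hγ1 : γ ≠ 1) :
    R.Throt - 2 * (S.Th0 + 2 * S.kappa) ≤ S.dang y x (γ • x) := by
  have hκ := S.kappa_pos
  have hΘ := S.Theta_pos
  have hTh0v : S.Th0 = 2 * S.Theta + 3 * S.kappa := rfl
  by_cases hW : 2 * (S.Th0 + 2 * S.kappa) < R.Throt
  swap
  · push_neg at hW
    have h0 := S.dang_nonneg y x (γ • x)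
    linarith
  have hW4 : 4 * S.kappa < R.Throt := by linarith
  by_contra hfail
  push_neg at hfail
  have hyx : y ∈ S.Act x := (S.act_symm x y).mp hact
  have hynex : y ≠ x := Ne.symm hne
  -- transported instances
  have hinst : ∀ γ' ∈ R.Γ x,
      x ∈ S.Act (γ' • y) ∧ x ≠ γ' • y ∧ (γ' * γ * γ'⁻¹) ∈ R.Γ (γ' • y) ∧ γ' * γ * γ'⁻¹ ≠ 1 ∧
      S.dang (γ' • y) x ((γ' * γ * γ'⁻¹) • x) < R.Throt - 2 * (S.Th0 + 2 * S.kappa) := by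
    intro γ' hγ'
    have hx1 : γ' • x = x := R.stab x γ' hγ'
    have hx2 : γ'⁻¹ • x = x := R.stab x γ'⁻¹ (inv_mem hγ')
    refine ⟨?_, ?_, ?_, ?_, ?_⟩
    · have h2 := S.smul_act γ' x y hact
      rwa [hx1] at h2
    · intro he
      apply hne
      have h3 : γ'⁻¹ • x = γ'⁻¹ • (γ' • y) := by rw [← he]
      rwa [inv_smul_smul, hx2] at h3
    · exact (R.conj γ' y γ).mp hγ
    · intro h1
      apply hγ1
      have h2 : γ = γ'⁻¹ * (γ' * γ * γ'⁻¹) * γ' := by group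
      rw [h1] at h2
      rw [h2]; group
    · have hγxact : γ • x ∈ S.Act y := R.smul_act' hγ hact
      have hγxy : γ • x ≠ y := R.smul_ne hγ hne
      have hD : S.dang (γ' • y) (γ' • x) (γ' • (γ • x)) = S.dang y x (γ • x) :=
        S.smul_dang γ' y x (γ • x) hact hγxact hne hγxy
      rw [hx1] at hD
      have he2 : (γ' * γ * γ'⁻¹) • x = γ' • (γ • x) := by
        rw [mul_smul, mul_smul, hx2]
      rw [he2, hD]
      exact hfail
  -- the image of the apex under Γ x is infinite
  have hfib : ∀ p : Y, {γ' : G | γ' ∈ R.Γ x ∧ γ' • y = p}.Finite :=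
    fun p => R.stab_finite hyx hynex p
  have hImInf : ((fun γ' : G => γ' • y) '' (R.Γ x : Set G)).Infinite := by
    intro hImFin
    apply R.infinite x
    have hsub : (R.Γ x : Set G) ⊆
        ⋃ p ∈ (fun γ' : G => γ' • y) '' (R.Γ x : Set G),
          {γ' : G | γ' ∈ R.Γ x ∧ γ' • y = p} := by
      intro γ' hγ'
      exact Set.mem_biUnion ⟨γ', hγ', rfl⟩ ⟨hγ', rfl⟩
    exact ((hImFin.biUnion (fun p _ => hfib p)).subset hsub)
  -- pigeonhole on the (finitely many) colours
  have hcolour : ∃ j : Fin m,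
      {p ∈ (fun γ' : G => γ' • y) '' (R.Γ x : Set G) | S.col p = j}.Infinite := by
    by_contra hall
    push_neg at hall
    apply hImInf
    have hsub : ((fun γ' : G => γ' • y) '' (R.Γ x : Set G)) ⊆
        ⋃ j ∈ (Set.univ : Set (Fin m)),
          {p ∈ (fun γ' : G => γ' • y) '' (R.Γ x : Set G) | S.col p = j} := by
      intro p hp
      exact Set.mem_biUnion (Set.mem_univ _) ⟨hp, rfl⟩
    exact ((Set.finite_univ.biUnion (fun j _ => hall j)).subset hsub)
  obtain ⟨j, hj⟩ := hcolour
  -- same-colour transported instances are impossible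
  have hjx : j ≠ S.col x := by
    intro hjeq
    obtain ⟨p, hpIm, hpj⟩ := hj.nonempty
    obtain ⟨γ', hγ', rfl⟩ := hpIm
    obtain ⟨hact', hne', hγm', hγ1', hfail'⟩ := hinst γ' hγ'
    have hcolxp : S.col x = S.col (γ' • y) := (hpj.trans hjeq).symm
    obtain ⟨hdisp, -⟩ := R.fire htrans hcolxp hne' hγm' hγ1' hW4
    have hcolgx : S.col ((γ' * γ * γ'⁻¹) • x) = S.col (γ' • y) := R.col_smul hγm' hcolxp
    rw [S.dang_eq_dmod hcolxp hcolgx] at hfail'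
    linarith
  -- fix the transfer point of x in colour j
  obtain ⟨t, ht⟩ := htrans x j
  have hcolt : S.col t = j := ht.1
  -- the infinite set of good apexes
  have hA' : ({p ∈ (fun γ' : G => γ' • y) '' (R.Γ x : Set G) | S.col p = j} \
      ({t, x} : Set Y)).Infinite :=
    hj.diff ((Set.finite_singleton x).insert t)
  obtain ⟨p₂, hp₂⟩ := hA'.nonempty
  obtain ⟨⟨hp₂Im, hp₂j⟩, hp₂ne⟩ := hp₂
  simp only [Set.mem_insert_iff, Set.mem_singleton_iff, not_or] at hp₂ne
  obtain ⟨hp₂t, hp₂x⟩ := hp₂ne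
  -- every other good apex sees `Θ < dmod p t p₂`
  have hzfact : ∀ p, p ∈ ({p ∈ (fun γ' : G => γ' • y) '' (R.Γ x : Set G) | S.col p = j} \
      ({t, x} : Set Y)) → p ≠ p₂ → S.Theta < S.dmod p t p₂ := by
    intro p hp hpp₂
    obtain ⟨⟨hpIm, hpj⟩, hpne⟩ := hp
    simp only [Set.mem_insert_iff, Set.mem_singleton_iff, not_or] at hpne
    obtain ⟨hpt, hpx⟩ := hpne
    obtain ⟨γ', hγ', rfl⟩ := hpIm
    obtain ⟨hact', hne', hγm', hγ1', hfail'⟩ := hinst γ' hγ'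
    have hcolxp : ¬ S.col x = S.col (γ' • y) := by
      rw [hpj]; exact fun h => hjx h.symm
    have hTt : R.IsTransferPt x (S.col (γ' • y)) t := by rw [hpj]; exact ht
    have hz := R.instance_hz htrans hact' hne' hγm' hγ1' hcolxp hTt (Ne.symm hpt) hW hfail'
    exact hz p₂ (hp₂j.trans hpj.symm) (Ne.symm hpp₂) hp₂t
  -- contradiction with properness of the pair (t, p₂)
  have hproper := S.dmod_proper t p₂ (hcolt.trans hp₂j.symm) (Ne.symm hp₂t)
  apply hA'.diff (Set.finite_singleton p₂)
  apply hproper.subset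
  intro p hp
  have hpA := hp.1
  have hpp₂' : p ≠ p₂ := by simpa using hp.2
  obtain ⟨⟨hpIm, hpj⟩, hpne⟩ := hpA
  simp only [Set.mem_insert_iff, Set.mem_singleton_iff, not_or] at hpne
  exact ⟨hpj.trans hcolt.symm, hpne.1, hpp₂', le_of_lt (hzfact p hp.1 hpp₂')⟩
end

section
/- Large projection onto an axis (abstract form of Proposition 4.1, fourth bullet). Let Y be a composite projection system with constant θ and modified distances with constants Θ, κ, acted on by a group G by isomorphisms. Fix an index i, a point v ∈ Y_i, and g ∈ G with g(Y_i) = Y_i such that the points gⁿv (n ∈ ℤ) are pairwise distinct. Let R ≥ 2Θ + 4κ and suppose that for every n ∈ ℤ one has d^⦟_{gⁿv}(g^{n−1}v, g^{n+1}v) ≥ R. Then for every ν ∈ Y_i not of the form gⁿv, there exists n ∈ ℤ such that d^⦟_{gⁿv}(ν, gν) > R/2 − κ. -/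
namespace LPA

variable {G Y : Type} [Group G] [MulAction G Y] {m : ℕ}

lemma gsmul (g : G) (v : Y) (k : ℤ) : g • (g ^ k • v) = g ^ (k + 1) • v := by
  rw [smul_smul]
  congr 1
  rw [add_comm, zpow_add, zpow_one]

lemma invzp (g : G) (n : ℤ) : (g⁻¹) ^ n = g ^ (-n) := by
  rw [inv_zpow, ← zpow_neg]

lemma dang_eq (S : CPS G Y m) (y x z : Y) (hx : S.col x = S.col y) (hz : S.col z = S.col y) :
    S.dang y x z = S.dmod y x z := by
  unfold CPS.dang
  rw [if_pos ⟨hx, hz⟩]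

lemma dmod_smul (S : CPS G Y m) (g : G) (y x z : Y)
    (hx : S.col x = S.col y) (hz : S.col z = S.col y) (hxy : x ≠ y) (hzy : z ≠ y) :
    S.dmod (g • y) (g • x) (g • z) = S.dmod y x z := by
  have h := S.smul_dang g y x z (S.act_piece x y hx) (S.act_piece z y hz) hxy hzy
  rwa [if_pos ⟨S.smul_col g x y hx, S.smul_col g z y hz⟩, if_pos ⟨hx, hz⟩] at h

lemma col_inv (S : CPS G Y m) (i : Fin m) (v : Y) (hv : S.col v = i) (g : G)
    (hg : ∀ w : Y, S.col w = i → S.col (g • w) = i) :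
    ∀ w : Y, S.col (g • w) = i → S.col w = i := by
  intro w hw
  have h1 : S.col (g • w) = S.col (g • v) := by rw [hw, hg v hv]
  have h2 := S.smul_col g⁻¹ (g • w) (g • v) h1
  simp only [inv_smul_smul] at h2
  rw [h2, hv]

lemma colAx (S : CPS G Y m) (i : Fin m) (v : Y) (hv : S.col v = i) (g : G)
    (hg : ∀ w : Y, S.col w = i → S.col (g • w) = i) :
    ∀ n : ℤ, S.col (g ^ n • v) = i := by
  intro n
  induction n using Int.induction_on with
  | zero => simpa using hv
  | succ k hk => rw [← gsmul]; exact hg _ hk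
  | pred k hk =>
      apply col_inv S i v hv g hg
      rw [gsmul, show (-(k : ℤ) - 1) + 1 = -(k : ℤ) by ring]
      exact hk

/-- If `ν` has `Θ`-large projection with the next axis point at every axis point,
we contradict properness of the modified distances. -/
lemma no_escape (S : CPS G Y m) (i : Fin m) (v : Y) (hv : S.col v = i) (g : G)
    (hc : ∀ n : ℤ, S.col (g ^ n • v) = i)
    (hinj : ∀ a b : ℤ, a ≠ b → g ^ a • v ≠ g ^ b • v)
    (ν : Y) (hν : S.col ν = i) (hνv : ∀ n : ℤ, ν ≠ g ^ n • v)
    (hA : ∀ n : ℤ, S.Theta ≤ S.dmod (g ^ n • v) ν (g ^ (n + 1) • v)) : False := by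
  classical
  have hcc : ∀ a b : ℤ, S.col (g ^ a • v) = S.col (g ^ b • v) :=
    fun a b => (hc a).trans (hc b).symm
  have hcν : ∀ a : ℤ, S.col ν = S.col (g ^ a • v) := fun a => hν.trans (hc a).symm
  have key : ∀ (k : ℕ) (n : ℤ), S.Theta ≤ S.dmod (g ^ n • v) ν (g ^ (n + 1 + (k : ℤ)) • v) := by
    intro k
    induction k with
    | zero => intro n; simpa using hA n
    | succ k ih =>
        intro n
        have hcond : S.Theta ≤ S.dmod (g ^ (n + 1 + (k : ℤ)) • v) ν (g ^ (n + 2 + (k : ℤ)) • v) := by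
          have := hA (n + 1 + (k : ℤ))
          rwa [show n + 1 + (k : ℤ) + 1 = n + 2 + (k : ℤ) by ring] at this
        have hmono := S.dmod_mono (g ^ n • v) ν (g ^ (n + 1 + (k : ℤ)) • v)
          (g ^ (n + 2 + (k : ℤ)) • v)
          (hcν n) (hcc _ n) (hcc _ n)
          (hνv n) (hinj _ n (by omega)) (hinj _ n (by omega))
          (hνv _) (hνv _) (hinj _ _ (by omega)) hcond
        have hle := le_trans (ih n) hmono.1
        have : S.Theta ≤ S.dmod (g ^ n • v) ν (g ^ (n + 2 + (k : ℤ)) • v) := hle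
        rwa [show ((k + 1 : ℕ) : ℤ) = (k : ℤ) + 1 by push_cast; ring,
          show n + 1 + ((k : ℤ) + 1) = n + 2 + (k : ℤ) by ring]
  have hνne : ν ≠ v := by simpa using hνv 0
  have hfin := S.dmod_proper ν v (hν.trans hv.symm) hνne
  have hmem : ∀ k : ℕ, (g ^ (-1 - (k : ℤ)) • v) ∈
      {y : Y | S.col y = S.col ν ∧ y ≠ ν ∧ y ≠ v ∧ S.Theta ≤ S.dmod y ν v} := by
    intro k
    refine ⟨(hc _).trans hν.symm, (hνv _).symm, ?_, ?_⟩
    · intro h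
      exact hinj (-1 - (k : ℤ)) 0 (by omega) (by simpa using h)
    · have := key k (-1 - (k : ℤ))
      rw [show (-1 - (k : ℤ)) + 1 + (k : ℤ) = 0 by ring] at this
      simpa using this
  have hinjf : Function.Injective (fun k : ℕ => g ^ (-1 - (k : ℤ)) • v) := by
    intro a b hab
    by_contra hne
    exact hinj _ _ (by omega) hab
  exact (Set.infinite_of_injective_forall_mem hinjf hmem) hfin

/-- The core step: if `ν` has a `Θ`-large, `κ`-large projection at some axis point
with the next axis point, while `gν` has a `κ`-small one there, then the conclusion
of the proposition holds. -/
lemma aux (S : CPS G Y m) (i : Fin m) (v : Y) (hv : S.col v = i) (g : G)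
    (hc : ∀ n : ℤ, S.col (g ^ n • v) = i)
    (hinj : ∀ a b : ℤ, a ≠ b → g ^ a • v ≠ g ^ b • v)
    (R : ℝ) (hR : 2 * S.Theta + 4 * S.kappa ≤ R)
    (haxm : ∀ n : ℤ, R ≤ S.dmod (g ^ n • v) (g ^ (n - 1) • v) (g ^ (n + 1) • v))
    (ν : Y) (hν : S.col ν = i) (hνv : ∀ n : ℤ, ν ≠ g ^ n • v)
    (hgν : ν ≠ g • ν) (hgνcol : S.col (g • ν) = i)
    (n₀ : ℤ)
    (h1 : S.Theta ≤ S.dmod (g ^ n₀ • v) ν (g ^ (n₀ + 1) • v))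
    (h2 : S.kappa < S.dmod (g ^ n₀ • v) ν (g ^ (n₀ + 1) • v))
    (h3 : S.dmod (g ^ n₀ • v) (g • ν) (g ^ (n₀ + 1) • v) ≤ S.kappa) :
    ∃ n : ℤ, R / 2 - S.kappa < S.dang (g ^ n • v) ν (g • ν) := by
  classical
  have hΘ := S.Theta_pos
  have hκ := S.kappa_pos
  have hcc : ∀ a b : ℤ, S.col (g ^ a • v) = S.col (g ^ b • v) :=
    fun a b => (hc a).trans (hc b).symm
  have hcν : ∀ a : ℤ, S.col ν = S.col (g ^ a • v) := fun a => hν.trans (hc a).symm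
  have hcgν : ∀ a : ℤ, S.col (g • ν) = S.col (g ^ a • v) := fun a => hgνcol.trans (hc a).symm
  have hgνax : ∀ a : ℤ, g • ν ≠ g ^ a • v := by
    intro a h
    apply hνv (a - 1)
    have h2' : g • (g ^ (a - 1) • v) = g ^ a • v := by
      rw [gsmul, show a - 1 + 1 = a by ring]
    rw [← h2'] at h
    exact MulAction.injective g h
  -- (s1): the projection of the pair (gⁿ⁰v, ν) to g^(n₀+1)v is small
  have hq : S.dmod (g ^ (n₀ + 1) • v) (g ^ n₀ • v) ν ≤ S.kappa := by
    have hmin := S.dmod_min (g ^ (n₀ + 1) • v) (g ^ n₀ • v) ν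
      (hcc _ _) (hcν _) (hinj _ _ (by omega)) (hνv _).symm (hνv _).symm
    have hsymm : S.dmod (g ^ n₀ • v) (g ^ (n₀ + 1) • v) ν
        = S.dmod (g ^ n₀ • v) ν (g ^ (n₀ + 1) • v) :=
      S.dmod_symm _ _ _ (hcc _ _) (hcν _) (hinj _ _ (by omega)) (hνv _)
    rcases min_le_iff.mp hmin with h | h
    · rw [hsymm] at h; linarith
    · exact h
  -- (s2): ν has a big projection at g^(n₀+1)v towards g^(n₀+2)v
  have hax1 : R ≤ S.dmod (g ^ (n₀ + 1) • v) (g ^ n₀ • v) (g ^ (n₀ + 2) • v) := by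
    have := haxm (n₀ + 1)
    rwa [show n₀ + 1 - 1 = n₀ by ring, show n₀ + 1 + 1 = n₀ + 2 by ring] at this
  have hγ : R - 2 * S.kappa ≤ S.dmod (g ^ (n₀ + 1) • v) ν (g ^ (n₀ + 2) • v) := by
    have htri := S.dmod_tri (g ^ (n₀ + 1) • v) (g ^ n₀ • v) (g ^ (n₀ + 2) • v) ν
      (hcc _ _) (hcc _ _) (hcν _)
      (hinj _ _ (by omega)) (hinj _ _ (by omega)) (hνv _)
      (hinj _ _ (by omega)) (hνv _).symm (hνv _).symm
    have hsymγ : S.dmod (g ^ (n₀ + 1) • v) (g ^ (n₀ + 2) • v) ν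
        = S.dmod (g ^ (n₀ + 1) • v) ν (g ^ (n₀ + 2) • v) :=
      S.dmod_symm _ _ _ (hcc _ _) (hcν _) (hinj _ _ (by omega)) (hνv _)
    rw [hsymγ] at htri
    linarith
  -- (s3): equivariance: dmod_{y'}(gν, y'') = dmod_y(ν, y')
  have hδ : S.dmod (g ^ (n₀ + 1) • v) (g • ν) (g ^ (n₀ + 2) • v)
      = S.dmod (g ^ n₀ • v) ν (g ^ (n₀ + 1) • v) := by
    have := dmod_smul S g (g ^ n₀ • v) ν (g ^ (n₀ + 1) • v)
      (hcν _) (hcc _ _) (hνv _) (hinj _ _ (by omega))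
    rwa [gsmul g v n₀, gsmul g v (n₀ + 1), show n₀ + 1 + 1 = n₀ + 2 by ring] at this
  rcases lt_or_ge (R / 2 + S.kappa) (S.dmod (g ^ n₀ • v) ν (g ^ (n₀ + 1) • v)) with hc1 | hc2
  · -- Case (i): the projection α is very large; answer n₀
    have htri := S.dmod_tri (g ^ n₀ • v) ν (g ^ (n₀ + 1) • v) (g • ν)
      (hcν _) (hcc _ _) (hcgν _)
      (hνv _) (hinj _ _ (by omega)) (hgνax _)
      (hνv _) hgν ((hgνax _).symm)
    have hs : S.dmod (g ^ n₀ • v) (g ^ (n₀ + 1) • v) (g • ν)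
        = S.dmod (g ^ n₀ • v) (g • ν) (g ^ (n₀ + 1) • v) :=
      S.dmod_symm _ _ _ (hcc _ _) (hcgν _) (hinj _ _ (by omega)) (hgνax _)
    rw [hs] at htri
    refine ⟨n₀, ?_⟩
    rw [dang_eq S _ _ _ (hcν _) (hcgν _)]
    linarith
  · -- Case (ii)
    have hγΘ : S.Theta ≤ S.dmod (g ^ (n₀ + 1) • v) ν (g ^ (n₀ + 2) • v) := by linarith
    have hm1 := S.dmod_mono (g ^ n₀ • v) ν (g ^ (n₀ + 1) • v) (g ^ (n₀ + 2) • v)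
      (hcν _) (hcc _ _) (hcc _ _)
      (hνv _) (hinj _ _ (by omega)) (hinj _ _ (by omega))
      (hνv _) (hνv _) (hinj _ _ (by omega)) hγΘ
    have hε : S.Theta ≤ S.dmod (g ^ n₀ • v) ν (g ^ (n₀ + 2) • v) := le_trans h1 hm1.1
    have hm2 := S.dmod_mono (g ^ (n₀ + 1) • v) ν (g ^ n₀ • v) (g ^ (n₀ + 2) • v)
      (hcν _) (hcc _ _) (hcc _ _)
      (hνv _) (hinj _ _ (by omega)) (hinj _ _ (by omega))
      (hνv _) (hνv _) (hinj _ _ (by omega)) hε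
    have hζ : R ≤ S.dmod (g ^ (n₀ + 1) • v) ν (g ^ (n₀ + 2) • v) := le_trans hax1 hm2.2
    -- (s7): triangle at y' through gν
    have htri2 := S.dmod_tri (g ^ (n₀ + 1) • v) ν (g ^ (n₀ + 2) • v) (g • ν)
      (hcν _) (hcc _ _) (hcgν _)
      (hνv _) (hinj _ _ (by omega)) (hgνax _)
      (hνv _) hgν ((hgνax _).symm)
    have hsym : S.dmod (g ^ (n₀ + 1) • v) (g ^ (n₀ + 2) • v) (g • ν)
        = S.dmod (g ^ (n₀ + 1) • v) (g • ν) (g ^ (n₀ + 2) • v) :=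
      S.dmod_symm _ _ _ (hcc _ _) (hcgν _) (hinj _ _ (by omega)) (hgνax _)
    rw [hsym, hδ] at htri2
    have hd2 : R - S.kappa - S.dmod (g ^ n₀ • v) ν (g ^ (n₀ + 1) • v)
        ≤ S.dmod (g ^ (n₀ + 1) • v) ν (g • ν) := by linarith
    have hd₂Θ : S.Theta ≤ S.dmod (g ^ (n₀ + 1) • v) ν (g • ν) := by linarith
    -- (s8): transfer: d₁ ≥ α
    have hm3 := S.dmod_mono (g ^ n₀ • v) ν (g ^ (n₀ + 1) • v) (g • ν)
      (hcν _) (hcc _ _) (hcgν _)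
      (hνv _) (hinj _ _ (by omega)) (hgνax _)
      (hνv _) hgν ((hgνax _).symm) hd₂Θ
    have hd₁Θ : S.Theta ≤ S.dmod (g ^ n₀ • v) ν (g • ν) := le_trans h1 hm3.1
    -- (s9): transfer: d₂ ≥ dmod_{y'}(y, gν)
    have hm4 := S.dmod_mono (g ^ (n₀ + 1) • v) ν (g ^ n₀ • v) (g • ν)
      (hcν _) (hcc _ _) (hcgν _)
      (hνv _) (hinj _ _ (by omega)) (hgνax _)
      (hνv _) hgν ((hgνax _).symm) hd₁Θ
    -- equivariance: dmod_{y'}(y, gν) = dmod_y(g^(n₀-1)v, ν)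
    have hE2 : S.dmod (g ^ (n₀ + 1) • v) (g ^ n₀ • v) (g • ν)
        = S.dmod (g ^ n₀ • v) (g ^ (n₀ - 1) • v) ν := by
      have := dmod_smul S g (g ^ n₀ • v) (g ^ (n₀ - 1) • v) ν
        (hcc _ _) (hcν _) (hinj _ _ (by omega)) (hνv _)
      rwa [gsmul g v n₀, gsmul g v (n₀ - 1), show n₀ - 1 + 1 = n₀ by ring] at this
    -- (s11): sum of the two half-projections at y is at least R - κ
    have htri3 := S.dmod_tri (g ^ n₀ • v) (g ^ (n₀ - 1) • v) (g ^ (n₀ + 1) • v) ν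
      (hcc _ _) (hcc _ _) (hcν _)
      (hinj _ _ (by omega)) (hinj _ _ (by omega)) (hνv _)
      (hinj _ _ (by omega)) (hνv _).symm (hνv _).symm
    have hsym2 : S.dmod (g ^ n₀ • v) (g ^ (n₀ + 1) • v) ν
        = S.dmod (g ^ n₀ • v) ν (g ^ (n₀ + 1) • v) :=
      S.dmod_symm _ _ _ (hcc _ _) (hcν _) (hinj _ _ (by omega)) (hνv _)
    rw [hsym2] at htri3
    have hax0 := haxm n₀
    -- d₁ ≥ α and d₂ ≥ dmod_y(g^(n₀-1)v, ν) ≥ R - κ - α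
    have hfin1 : S.dmod (g ^ n₀ • v) ν (g ^ (n₀ + 1) • v) ≤ S.dmod (g ^ n₀ • v) ν (g • ν) :=
      hm3.1
    have hfin2 : S.dmod (g ^ n₀ • v) (g ^ (n₀ - 1) • v) ν
        ≤ S.dmod (g ^ (n₀ + 1) • v) ν (g • ν) := by
      rw [← hE2]; exact hm4.2
    rcases le_or_gt (R / 2) (S.dmod (g ^ n₀ • v) ν (g ^ (n₀ + 1) • v)) with hbig | hsmall
    · refine ⟨n₀, ?_⟩
      rw [dang_eq S _ _ _ (hcν _) (hcgν _)]
      linarith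
    · refine ⟨n₀ + 1, ?_⟩
      rw [dang_eq S _ _ _ (hcν _) (hcgν _)]
      linarith

end LPA

/-- Abstract form of Proposition 4.1, fourth bullet: a point of Y_i not on the "axis"
has a large projection between itself and its translate at some axis point. -/
theorem large_projection_onto_axis
    {G Y : Type} [Group G] [MulAction G Y] {m : ℕ}
    (S : CPS G Y m)
    (i : Fin m) (v : Y) (hv : S.col v = i)
    (g : G) (hg : ∀ w : Y, S.col w = i → S.col (g • w) = i)
    (hinj : ∀ a b : ℤ, a ≠ b → g ^ a • v ≠ g ^ b • v)
    (R : ℝ) (hR : 2 * S.Theta + 4 * S.kappa ≤ R)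
    (hax : ∀ n : ℤ, R ≤ S.dang (g ^ n • v) (g ^ (n - 1) • v) (g ^ (n + 1) • v))
    (ν : Y) (hν : S.col ν = i) (hνv : ∀ n : ℤ, ν ≠ g ^ n • v) :
    ∃ n : ℤ, R / 2 - S.kappa < S.dang (g ^ n • v) ν (g • ν) := by
  classical
  open LPA in
  have hΘ := S.Theta_pos
  have hκ := S.kappa_pos
  have hc : ∀ n : ℤ, S.col (g ^ n • v) = i := colAx S i v hv g hg
  have hcc : ∀ a b : ℤ, S.col (g ^ a • v) = S.col (g ^ b • v) :=
    fun a b => (hc a).trans (hc b).symm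
  have hcν : ∀ a : ℤ, S.col ν = S.col (g ^ a • v) := fun a => hν.trans (hc a).symm
  have hcgν : ∀ a : ℤ, S.col (g • ν) = S.col (g ^ a • v) :=
    fun a => (hg ν hν).trans (hc a).symm
  have haxm : ∀ n : ℤ, R ≤ S.dmod (g ^ n • v) (g ^ (n - 1) • v) (g ^ (n + 1) • v) := by
    intro n
    have := hax n
    rwa [dang_eq S _ _ _ (hcc _ _) (hcc _ _)] at this
  -- the two half-projections at an axis point sum to at least R - κ
  have hsum : ∀ n : ℤ, R - S.kappa ≤
      S.dmod (g ^ n • v) ν (g ^ (n - 1) • v) + S.dmod (g ^ n • v) ν (g ^ (n + 1) • v) := by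
    intro n
    have htri := S.dmod_tri (g ^ n • v) (g ^ (n - 1) • v) (g ^ (n + 1) • v) ν
      (hcc _ _) (hcc _ _) (hcν _)
      (hinj _ _ (by omega)) (hinj _ _ (by omega)) (hνv _)
      (hinj _ _ (by omega)) (hνv _).symm (hνv _).symm
    have e1 : S.dmod (g ^ n • v) (g ^ (n - 1) • v) ν = S.dmod (g ^ n • v) ν (g ^ (n - 1) • v) :=
      S.dmod_symm _ _ _ (hcc _ _) (hcν _) (hinj _ _ (by omega)) (hνv _)
    have e2 : S.dmod (g ^ n • v) (g ^ (n + 1) • v) ν = S.dmod (g ^ n • v) ν (g ^ (n + 1) • v) :=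
      S.dmod_symm _ _ _ (hcc _ _) (hcν _) (hinj _ _ (by omega)) (hνv _)
    rw [e1, e2] at htri
    linarith [haxm n]
  -- a large forward projection at n forces a small backward projection at n+1
  have hstep : ∀ n : ℤ, S.kappa < S.dmod (g ^ n • v) ν (g ^ (n + 1) • v) →
      S.dmod (g ^ (n + 1) • v) ν (g ^ n • v) ≤ S.kappa := by
    intro n hn
    have hmin := S.dmod_min (g ^ (n + 1) • v) (g ^ n • v) ν
      (hcc _ _) (hcν _) (hinj _ _ (by omega)) (hνv _).symm (hνv _).symm
    have e1 : S.dmod (g ^ n • v) (g ^ (n + 1) • v) ν = S.dmod (g ^ n • v) ν (g ^ (n + 1) • v) :=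
      S.dmod_symm _ _ _ (hcc _ _) (hcν _) (hinj _ _ (by omega)) (hνv _)
    have e2 : S.dmod (g ^ (n + 1) • v) (g ^ n • v) ν = S.dmod (g ^ (n + 1) • v) ν (g ^ n • v) :=
      S.dmod_symm _ _ _ (hcc _ _) (hcν _) (hinj _ _ (by omega)) (hνv _)
    rw [e1, e2] at hmin
    rcases min_le_iff.mp hmin with h | h
    · linarith
    · exact h
  have hstep2 : ∀ n : ℤ, S.kappa < S.dmod (g ^ n • v) ν (g ^ (n + 1) • v) →
      R - 2 * S.kappa ≤ S.dmod (g ^ (n + 1) • v) ν (g ^ (n + 2) • v) := by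
    intro n hn
    have hb := hstep n hn
    have hs := hsum (n + 1)
    rw [show n + 1 - 1 = n by ring, show n + 1 + 1 = n + 2 by ring] at hs
    linarith
  -- there is an index where the forward projection is small
  have hex2 : ∃ n2 : ℤ, S.dmod (g ^ n2 • v) ν (g ^ (n2 + 1) • v) ≤ S.kappa := by
    by_contra hcon
    push_neg at hcon
    have hA : ∀ n : ℤ, S.Theta ≤ S.dmod (g ^ n • v) ν (g ^ (n + 1) • v) := by
      intro n
      have := hstep2 (n - 1) (hcon (n - 1))
      rw [show n - 1 + 1 = n by ring, show n - 1 + 2 = n + 1 by ring] at this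
      linarith
    exact (no_escape S i v hv g hc hinj ν hν hνv hA).elim
  -- inverse-direction data
  have hc' : ∀ n : ℤ, S.col ((g⁻¹) ^ n • v) = i := by
    intro n; rw [invzp]; exact hc (-n)
  have hinj' : ∀ a b : ℤ, a ≠ b → (g⁻¹) ^ a • v ≠ (g⁻¹) ^ b • v := by
    intro a b hab
    rw [invzp, invzp]
    exact hinj _ _ (by omega)
  have hνv' : ∀ n : ℤ, ν ≠ (g⁻¹) ^ n • v := by
    intro n; rw [invzp]; exact hνv _
  -- there is an index where the forward projection is large
  have hex1 : ∃ n1 : ℤ, S.kappa < S.dmod (g ^ n1 • v) ν (g ^ (n1 + 1) • v) := by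
    by_contra hcon
    push_neg at hcon
    have hB : ∀ n : ℤ, S.Theta ≤ S.dmod (g ^ n • v) ν (g ^ (n - 1) • v) := by
      intro n
      have := hsum n
      linarith [hcon n]
    have hA' : ∀ n : ℤ, S.Theta ≤ S.dmod ((g⁻¹) ^ n • v) ν ((g⁻¹) ^ (n + 1) • v) := by
      intro n
      rw [invzp, invzp]
      have := hB (-n)
      rwa [show -n - 1 = -(n + 1) by ring] at this
    exact (no_escape S i v hv g⁻¹ hc' hinj' ν hν hνv' hA').elim
  obtain ⟨n1, hn1⟩ := hex1
  obtain ⟨n2, hn2⟩ := hex2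
  -- ν is not g-fixed
  have hgν : ν ≠ g • ν := by
    intro hcontra
    have hconst : ∀ n : ℤ, S.dmod (g ^ (n + 1) • v) ν (g ^ (n + 2) • v)
        = S.dmod (g ^ n • v) ν (g ^ (n + 1) • v) := by
      intro n
      have := dmod_smul S g (g ^ n • v) ν (g ^ (n + 1) • v)
        (hcν n) (hcc _ _) (hνv n) (hinj _ _ (by omega))
      rwa [gsmul g v n, gsmul g v (n + 1), show n + 1 + 1 = n + 2 by ring, ← hcontra] at this
    have hall : ∀ n : ℤ, S.dmod (g ^ n • v) ν (g ^ (n + 1) • v)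
        = S.dmod (g ^ (0 : ℤ) • v) ν (g ^ ((0 : ℤ) + 1) • v) := by
      intro n
      induction n using Int.induction_on with
      | zero => rfl
      | succ k ih =>
          rw [← ih]
          have h' := hconst (k : ℤ)
          rw [show (k : ℤ) + 2 = (k : ℤ) + 1 + 1 by ring] at h'
          exact h'
      | pred k ih =>
          rw [← ih]
          have h' := hconst (-(k : ℤ) - 1)
          rw [show -(k : ℤ) - 1 + 1 = -(k : ℤ) by ring,
            show -(k : ℤ) - 1 + 2 = -(k : ℤ) + 1 by ring] at h'
          rw [show -(k : ℤ) - 1 + 1 = -(k : ℤ) by ring]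
          exact h'.symm
    rw [hall n1] at hn1
    rw [hall n2] at hn2
    linarith
  -- existence of a least index with large forward projection
  have hup : ∀ z : ℤ, S.kappa < S.dmod (g ^ z • v) ν (g ^ (z + 1) • v) →
      ∀ k : ℕ, S.kappa < S.dmod (g ^ (z + (k : ℤ)) • v) ν (g ^ (z + (k : ℤ) + 1) • v) := by
    intro z hz k
    induction k with
    | zero => simpa using hz
    | succ k ih =>
        have h2 := hstep2 (z + (k : ℤ)) ih
        have hgoal : S.kappa < S.dmod (g ^ (z + (k : ℤ) + 1) • v) ν (g ^ (z + (k : ℤ) + 2) • v) := by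
          linarith
        rwa [show ((k + 1 : ℕ) : ℤ) = (k : ℤ) + 1 by push_cast; ring,
          show z + ((k : ℤ) + 1) = z + (k : ℤ) + 1 by ring,
          show z + (k : ℤ) + 1 + 1 = z + (k : ℤ) + 2 by ring]
  have hbdd : ∀ z : ℤ, S.kappa < S.dmod (g ^ z • v) ν (g ^ (z + 1) • v) → n2 + 1 ≤ z := by
    intro z hz
    by_contra hlt
    push_neg at hlt
    have hk := hup z hz (n2 - z).toNat
    rw [Int.toNat_of_nonneg (by omega), show z + (n2 - z) = n2 by ring] at hk
    linarith
  obtain ⟨n₀, hn₀, hleast⟩ := Int.exists_least_of_bdd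
    (P := fun n => S.kappa < S.dmod (g ^ n • v) ν (g ^ (n + 1) • v)) ⟨n2 + 1, hbdd⟩ ⟨n1, hn1⟩
  have hprev : S.dmod (g ^ (n₀ - 1) • v) ν (g ^ n₀ • v) ≤ S.kappa := by
    by_contra hcp
    push_neg at hcp
    have hcp' : S.kappa < S.dmod (g ^ (n₀ - 1) • v) ν (g ^ (n₀ - 1 + 1) • v) := by
      rwa [show n₀ - 1 + 1 = n₀ by ring]
    have := hleast (n₀ - 1) hcp'
    omega
  rcases le_or_gt S.Theta (S.dmod (g ^ n₀ • v) ν (g ^ (n₀ + 1) • v)) with hcase | hcase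
  · -- forward application of aux
    have h3 : S.dmod (g ^ n₀ • v) (g • ν) (g ^ (n₀ + 1) • v) ≤ S.kappa := by
      have heq := dmod_smul S g (g ^ (n₀ - 1) • v) ν (g ^ n₀ • v)
        (hcν _) (hcc _ _) (hνv _) (hinj _ _ (by omega))
      rw [gsmul g v (n₀ - 1), gsmul g v n₀, show n₀ - 1 + 1 = n₀ by ring] at heq
      rw [heq]
      exact hprev
    exact aux S i v hv g hc hinj R hR haxm ν hν hνv hgν (hg ν hν) n₀ hcase hn₀ h3
  · -- backward application of aux, with g⁻¹
    have hs := hsum n₀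
    have hbb : R - S.kappa - S.Theta < S.dmod (g ^ n₀ • v) ν (g ^ (n₀ - 1) • v) := by
      linarith
    have hb1 : S.dmod (g ^ (n₀ + 1) • v) ν (g ^ n₀ • v) ≤ S.kappa := hstep n₀ hn₀
    have haxm' : ∀ n : ℤ, R ≤
        S.dmod ((g⁻¹) ^ n • v) ((g⁻¹) ^ (n - 1) • v) ((g⁻¹) ^ (n + 1) • v) := by
      intro n
      rw [invzp, invzp, invzp, show -(n - 1) = -n + 1 by ring, show -(n + 1) = -n - 1 by ring]
      have hsym := S.dmod_symm (g ^ (-n) • v) (g ^ (-n + 1) • v) (g ^ (-n - 1) • v)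
        (hcc _ _) (hcc _ _) (hinj _ _ (by omega)) (hinj _ _ (by omega))
      rw [hsym]
      exact haxm (-n)
    have hgν' : ν ≠ g⁻¹ • ν := by
      intro h
      apply hgν
      have h' : g • ν = g • (g⁻¹ • ν) := by rw [← h]
      rw [smul_inv_smul] at h'
      exact h'.symm
    have hgνcol' : S.col (g⁻¹ • ν) = i := by
      apply col_inv S i v hv g hg
      rw [smul_inv_smul]
      exact hν
    have hginvνax : ∀ a : ℤ, g⁻¹ • ν ≠ g ^ a • v := by
      intro a h
      apply hνv (a + 1)
      have h' : g • (g⁻¹ • ν) = g • (g ^ a • v) := by rw [h]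
      rwa [smul_inv_smul, gsmul] at h'
    have h1' : S.Theta ≤ S.dmod ((g⁻¹) ^ (-n₀) • v) ν ((g⁻¹) ^ (-n₀ + 1) • v) := by
      rw [invzp, invzp, show -(-n₀) = n₀ by ring, show -(-n₀ + 1) = n₀ - 1 by ring]
      linarith
    have h2' : S.kappa < S.dmod ((g⁻¹) ^ (-n₀) • v) ν ((g⁻¹) ^ (-n₀ + 1) • v) := by
      rw [invzp, invzp, show -(-n₀) = n₀ by ring, show -(-n₀ + 1) = n₀ - 1 by ring]
      linarith
    have h3' : S.dmod ((g⁻¹) ^ (-n₀) • v) (g⁻¹ • ν) ((g⁻¹) ^ (-n₀ + 1) • v) ≤ S.kappa := by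
      rw [invzp, invzp, show -(-n₀) = n₀ by ring, show -(-n₀ + 1) = n₀ - 1 by ring]
      have heq := dmod_smul S g (g ^ n₀ • v) (g⁻¹ • ν) (g ^ (n₀ - 1) • v)
        (hgνcol'.trans (hc n₀).symm) (hcc _ _) (hginvνax _) (hinj _ _ (by omega))
      rw [gsmul g v n₀, gsmul g v (n₀ - 1), show n₀ - 1 + 1 = n₀ by ring, smul_inv_smul] at heq
      rw [← heq]
      exact hb1
    obtain ⟨mm, hmm⟩ := aux S i v hv g⁻¹ hc' hinj' R hR haxm' ν hν hνv' hgν' hgνcol'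
      (-n₀) h1' h2' h3'
    refine ⟨1 - mm, ?_⟩
    rw [dang_eq S _ _ _ (hcν _) (hcgν _)]
    rw [dang_eq S _ _ _ (hν.trans (hc' mm).symm) (hgνcol'.trans (hc' mm).symm)] at hmm
    rw [invzp] at hmm
    have hsf : S.dmod (g ^ (-mm) • v) ν (g⁻¹ • ν) = S.dmod (g ^ (-mm) • v) (g⁻¹ • ν) ν :=
      S.dmod_symm _ _ _ (hcν _) (hgνcol'.trans (hc _).symm) (hνv _) (hginvνax _)
    have heq := dmod_smul S g (g ^ (-mm) • v) (g⁻¹ • ν) ν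
      (hgνcol'.trans (hc _).symm) (hcν _) (hginvνax _) (hνv _)
    rw [gsmul g v (-mm), smul_inv_smul, show -mm + 1 = 1 - mm by ring] at heq
    rw [heq, ← hsf]
    exact hmm
end

section
/- Bounded projections of loxodromic orbits (claim in the proof of Theorem 3.1). Let (X,Y) be a G-composite projection graph with modified distances and BGIT constant C, equipped with a composite rotating family satisfying the transfer property. Let γ ∈ G be loxodromic on X with basepoint x₀ (a vertex), and suppose there is μ ≥ 0 such that for every n ∈ ℤ, every geodesic in X from x₀ to γⁿx₀ lies at Hausdorff distance at most μ from the set {γⁱx₀ : i between 0 and n}. Then L_γ(x₀) := sup { d^⦟_s(x₀, γⁿx₀) : n ∈ ℤ, s a vertex for which the quantity is defined } is finite. -/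
section BPHelpers

open SimpleGraph

variable {G Y : Type} [Group G] [MulAction G Y] {m : ℕ}

private lemma CPS.dangD (S : CPS G Y m) {y x z : Y} (h1 : S.col x = S.col y)
    (h2 : S.col z = S.col y) : S.dang y x z = S.dmod y x z := if_pos ⟨h1, h2⟩

private lemma CPS.dangP (S : CPS G Y m) {y x z : Y}
    (h : ¬(S.col x = S.col y ∧ S.col z = S.col y)) : S.dang y x z = S.dpi y x z := if_neg h

private lemma CPS.dang_smul (S : CPS G Y m) (g : G) (y x z : Y) (hx : x ∈ S.Act y)
    (hz : z ∈ S.Act y) (hxy : x ≠ y) (hzy : z ≠ y) :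
    S.dang (g • y) (g • x) (g • z) = S.dang y x z :=
  S.smul_dang g y x z hx hz hxy hzy

private lemma CPS.dang_symm_s12 (S : CPS G Y m) (y u v : Y) (hu : u ∈ S.Act y) (hv : v ∈ S.Act y)
    (huy : u ≠ y) (hvy : v ≠ y) : S.dang y u v = S.dang y v u := by
  by_cases h : S.col u = S.col y ∧ S.col v = S.col y
  · rw [S.dangD h.1 h.2, S.dangD h.2 h.1]
    exact S.dmod_symm y u v h.1 h.2 huy hvy
  · rw [S.dangP h, S.dangP (fun hc => h ⟨hc.2, hc.1⟩)]
    exact S.dpi_symm y u v hu hv huy hvy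

private lemma CPS.col_smul_iff (S : CPS G Y m) (g : G) (u v : Y) :
    S.col (g • u) = S.col (g • v) ↔ S.col u = S.col v :=
  ⟨fun h => by simpa using S.smul_col g⁻¹ _ _ h, S.smul_col g u v⟩

private lemma CPS.trdmod (S : CPS G Y m) (g : G) (s v w : Y) (hcv : S.col v = S.col s)
    (hcw : S.col w = S.col s) (hvs : v ≠ s) (hws : w ≠ s) :
    S.dmod (g • s) (g • v) (g • w) = S.dmod s v w := by
  have h := S.dang_smul g s v w (S.act_piece v s hcv) (S.act_piece w s hcw) hvs hws
  rwa [S.dangD hcv hcw, S.dangD (S.smul_col g v s hcv) (S.smul_col g w s hcw)] at h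

private lemma CPS.hopconv (S : CPS G Y m) (s v w : Y) (hv : v ∈ S.Act s) (hvs : v ≠ s)
    (hws : w ≠ s) (hcv : S.col v = S.col s) (hcw : S.col w = S.col s) (E : ℝ)
    (hE : S.dmod s v w ≤ E) : S.dpi s v w ≤ max S.theta (E + S.kappa) := by
  by_cases hvw : v = w
  · subst hvw; exact le_max_of_le_left (S.separation s v hv hvs).le
  · have h := (S.dmod_le_dpi s v w hcv hcw hvs hws hvw).1
    exact le_max_of_le_right (by linarith)

private lemma CPS.hopconv2 (S : CPS G Y m) (s v w : Y) (hv : v ∈ S.Act s) (hw : w ∈ S.Act s)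
    (hvs : v ≠ s) (hws : w ≠ s) (hcw : S.col w = S.col s) (h : S.dang s v w ≤ S.kappa) :
    S.dpi s v w ≤ max S.theta (2 * S.kappa) := by
  by_cases hcv : S.col v = S.col s
  · rw [S.dangD hcv hcw] at h
    have h2 := S.hopconv s v w hv hvs hws hcv hcw S.kappa h
    have : S.kappa + S.kappa = 2 * S.kappa := by ring
    rwa [this] at h2
  · rw [S.dangP (fun hc => hcv hc.1)] at h
    have := S.kappa_pos
    exact le_max_of_le_right (by linarith)

/-- sup of modified projections onto a fixed distinct same-coloured pair is bounded. -/
private lemma CPS.propSup (S : CPS G Y m) (v w : Y) (hc : S.col v = S.col w) (hne : v ≠ w) :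
    ∃ M : ℝ, ∀ y : Y, S.col y = S.col v → y ≠ v → y ≠ w → S.dmod y v w ≤ M := by
  classical
  have hfin := S.dmod_proper v w hc hne
  refine ⟨(insert S.Theta (hfin.toFinset.image fun y => S.dmod y v w)).max'
    ⟨S.Theta, Finset.mem_insert_self _ _⟩, ?_⟩
  intro y hcy hyv hyw
  by_cases hy : S.Theta ≤ S.dmod y v w
  · refine Finset.le_max' _ _ ?_
    refine Finset.mem_insert_of_mem (Finset.mem_image_of_mem _ ?_)
    rw [Set.Finite.mem_toFinset]
    exact ⟨hcy, hyv, hyw, hy⟩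
  · push_neg at hy
    exact hy.le.trans (Finset.le_max' _ _ (Finset.mem_insert_self _ _))

private lemma CRF.G1' {S : CPS G Y m} (R : CRF S) (x p q : Y) (hq : q ∈ S.Act x)
    (hqx : q ≠ x) : {g : G | g ∈ R.Γ x ∧ g • p = q}.Finite := by
  by_contra hinf
  replace hinf : Set.Infinite {g : G | g ∈ R.Γ x ∧ g • p = q} := hinf
  obtain ⟨γ₀, hγ₀⟩ := hinf.nonempty
  have himg := hinf.image ((mul_left_injective γ₀⁻¹).injOn)
  refine (himg.mono ?_) (R.proper_isotropy (S.dang x q q + 1) x q hq hqx)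
  rintro _ ⟨g, hg, rfl⟩
  refine ⟨mul_mem hg.1 (inv_mem hγ₀.1), ?_⟩
  have hp : (γ₀⁻¹ : G) • q = p := by rw [← hγ₀.2, inv_smul_smul]
  rw [mul_smul, hp, hg.2]
  linarith

private lemma CRF.G2 {S : CPS G Y m} (R : CRF S) (x : Y) :
    {g : G | g ∈ R.Γ x ∧ ∀ y : Y, S.col (g • y) = S.col y}.Infinite := by
  classical
  set Φ : G → Fin m → Fin m := fun g c =>
    if h : ∃ y : Y, S.col y = c then S.col (g • h.choose) else c with hΦdef
  have hΦ : ∀ (g : G) (y : Y), S.col (g • y) = Φ g (S.col y) := by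
    intro g y
    have hex : ∃ y' : Y, S.col y' = S.col y := ⟨y, rfl⟩
    simp only [hΦdef, dif_pos hex]
    exact S.smul_col g y hex.choose hex.choose_spec.symm
  have hfib : ∃ v : Fin m → Fin m, {g : G | g ∈ R.Γ x ∧ Φ g = v}.Infinite := by
    by_contra hall
    push_neg at hall
    have hsub : (R.Γ x : Set G) ⊆
        ⋃ v ∈ (Set.univ : Set (Fin m → Fin m)), {g : G | g ∈ R.Γ x ∧ Φ g = v} :=
      fun g hg => Set.mem_biUnion (Set.mem_univ _) ⟨hg, rfl⟩
    exact R.infinite x ((Set.finite_univ.biUnion fun v _ => hall v).subset hsub)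
  obtain ⟨v, hv⟩ := hfib
  obtain ⟨γ₀, hγ₀⟩ := hv.nonempty
  have himg := hv.image ((mul_right_injective γ₀⁻¹).injOn)
  refine himg.mono ?_
  rintro _ ⟨g, hg, rfl⟩
  refine ⟨mul_mem (inv_mem hγ₀.1) hg.1, fun y => ?_⟩
  have h1 : S.col (g • y) = S.col (γ₀ • y) := by rw [hΦ g y, hΦ γ₀ y, hg.2, hγ₀.2]
  have h2 : S.col (γ₀⁻¹ • g • y) = S.col (γ₀⁻¹ • γ₀ • y) := S.smul_col _ _ _ h1
  rw [inv_smul_smul] at h2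
  rw [mul_smul]
  exact h2

/-- the graph morphism given by the action of a group element -/
private def ghom (X : SimpleGraph Y) (hequiv : GraphEquiv G X) (g : G) : X →g X :=
  ⟨fun y => g • y, fun {a b} h => hequiv g a b h⟩

private lemma ghom_apply (X : SimpleGraph Y) (hequiv : GraphEquiv G X) (g : G) (y : Y) :
    ghom X hequiv g y = g • y := rfl

private lemma bp_dist_smul_le (X : SimpleGraph Y) (hconn : X.Connected)
    (hequiv : GraphEquiv G X) (g : G) (x y : Y) :
    X.dist (g • x) (g • y) ≤ X.dist x y := by
  obtain ⟨w, hw⟩ := hconn.exists_walk_length_eq_dist x y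
  have h := SimpleGraph.dist_le (w.map (ghom X hequiv g))
  rwa [SimpleGraph.Walk.length_map, hw] at h

private lemma bp_dist_smul (X : SimpleGraph Y) (hconn : X.Connected)
    (hequiv : GraphEquiv G X) (g : G) (x y : Y) :
    X.dist (g • x) (g • y) = X.dist x y := by
  refine le_antisymm (bp_dist_smul_le X hconn hequiv g x y) ?_
  have h := bp_dist_smul_le X hconn hequiv g⁻¹ (g • x) (g • y)
  simpa using h

private lemma bp_dist_end_le {X : SimpleGraph Y} {p q v : Y} (w : X.Walk p q)
    (hv : v ∈ w.support) : X.dist v q ≤ w.length := by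
  classical
  exact le_trans (SimpleGraph.dist_le (w.dropUntil v hv))
    (SimpleGraph.Walk.length_dropUntil_le w hv)

end BPHelpers
set_option maxHeartbeats 10000000 in
/-- Bounded projections of a loxodromic orbit (claim in the proof of Theorem 3.1). -/
theorem bounded_projections_of_loxodromic_orbit
    {G Y : Type} [Group G] [MulAction G Y] {m : ℕ}
    (S : CPS G Y m) (R : CRF S) (X : SimpleGraph Y) (δ C : ℝ)
    (hδ : 0 ≤ δ) (hC : 0 < C)
    (hconn : X.Connected)
    (hslim : SlimTriangles X δ)
    (hequiv : GraphEquiv G X)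
    (hbgit : BGIT S X C)
    (hfix : FixNbrs R X)
    (htrans : R.Transfer)
    (γ : G) (x₀ : Y) (lam : ℝ) (hlam : 0 < lam)
    (hlox : ∀ n : ℤ, lam * |(n : ℝ)| ≤ (X.dist x₀ (γ ^ n • x₀) : ℝ))
    (μ : ℝ) (hμ0 : 0 ≤ μ)
    (hμ : ∀ (n : ℤ) (w : X.Walk x₀ (γ ^ n • x₀)), IsGeodesic X w →
      (∀ v ∈ w.support, ∃ i : ℤ, min 0 n ≤ i ∧ i ≤ max 0 n ∧
        (X.dist v (γ ^ i • x₀) : ℝ) ≤ μ) ∧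
      (∀ i : ℤ, min 0 n ≤ i → i ≤ max 0 n → ∃ v ∈ w.support,
        (X.dist v (γ ^ i • x₀) : ℝ) ≤ μ)) :
    ∃ L : ℝ, ∀ (n : ℤ) (s : Y), S.Dfnd s x₀ (γ ^ n • x₀) →
      S.dang s x₀ (γ ^ n • x₀) ≤ L := by
  classical
  have hz : ∀ (a b : ℤ) (y : Y), γ ^ a • γ ^ b • y = γ ^ (a + b) • y := by
    intro a b y; rw [smul_smul, ← zpow_add]
  have hzc : ∀ (a : ℤ) (y : Y), γ ^ a • γ ^ (-a) • y = y := by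
    intro a y; rw [hz]; simp
  have hzc' : ∀ (a : ℤ) (y : Y), γ ^ (-a) • γ ^ a • y = y := by
    intro a y; rw [hz]; simp
  have triR : ∀ p q r : Y, (X.dist p r : ℝ) ≤ (X.dist p q : ℝ) + (X.dist q r : ℝ) := by
    intro p q r; exact_mod_cast hconn.dist_triangle
  have symR : ∀ p q : Y, (X.dist p q : ℝ) = (X.dist q p : ℝ) := by
    intro p q; rw [SimpleGraph.dist_comm]
  have distsm : ∀ (g : G) (u v : Y), X.dist (g • u) (g • v) = X.dist u v :=
    fun g u v => bp_dist_smul X hconn hequiv g u v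
  have orbd : ∀ j k : ℤ, lam * |(k : ℝ) - (j : ℝ)| ≤ (X.dist (γ ^ j • x₀) (γ ^ k • x₀) : ℝ) := by
    intro j k
    have h1 := hlox (k - j)
    have h2 : X.dist (γ ^ j • x₀) (γ ^ k • x₀) = X.dist x₀ (γ ^ (k - j) • x₀) := by
      have h3 := distsm (γ ^ j) x₀ (γ ^ (k - j) • x₀)
      rw [hz, show j + (k - j) = k by ring] at h3
      exact h3
    rw [h2]
    have h4 : |(k : ℝ) - (j : ℝ)| = |((k - j : ℤ) : ℝ)| := by push_cast; ring_nf
    rw [h4]; exact h1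
  -- transfer points and constants
  set tp : Fin m → Y := fun i => (htrans x₀ i).choose with htpdef
  have tps : ∀ i : Fin m, R.IsTransferPt x₀ i (tp i) := fun i => (htrans x₀ i).choose_spec
  set Tf : Finset Y := insert x₀ (Finset.image tp Finset.univ) with hTfdef
  have hx₀Tf : x₀ ∈ Tf := Finset.mem_insert_self _ _
  have htpTf : ∀ i, tp i ∈ Tf :=
    fun i => Finset.mem_insert_of_mem (Finset.mem_image_of_mem _ (Finset.mem_univ i))
  set ρb : ℝ := Tf.sup' ⟨x₀, hx₀Tf⟩ (fun v => (X.dist v x₀ : ℝ)) with hρbdef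
  have hρ : ∀ u ∈ Tf, (X.dist u x₀ : ℝ) ≤ ρb := by
    intro u hu; rw [hρbdef]; exact Finset.le_sup' (fun v => (X.dist v x₀ : ℝ)) hu
  have hρ0 : 0 ≤ ρb := le_trans (Nat.cast_nonneg _) (hρ x₀ hx₀Tf)
  set μh : ℝ := 1 + 2*δ + μ + ρb with hμhdef
  have hμh1 : 1 + ρb ≤ μh := by simp only [hμhdef]; linarith
  have hμh0 : 0 < μh := by linarith
  -- geodesics between orbit points fellow-travel the orbit
  have geo_orbit : ∀ a b : ℤ, a ≤ b → ∃ w : X.Walk (γ ^ a • x₀) (γ ^ b • x₀),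
      IsGeodesic X w ∧ (∀ v ∈ w.support, ∃ j : ℤ, a ≤ j ∧ j ≤ b ∧
        (X.dist v (γ ^ j • x₀) : ℝ) ≤ μ) := by
    intro a b hab
    obtain ⟨w0, hw0⟩ := hconn.exists_walk_length_eq_dist x₀ (γ ^ (b - a) • x₀)
    have hend : γ ^ a • γ ^ (b - a) • x₀ = γ ^ b • x₀ := by
      rw [hz, show a + (b - a) = b by ring]
    refine ⟨(w0.map (ghom X hequiv (γ ^ a))).copy (ghom_apply X hequiv (γ ^ a) x₀)
      ((ghom_apply X hequiv (γ ^ a) _).trans hend), ?_, ?_⟩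
    · show _ = _
      rw [SimpleGraph.Walk.length_copy, SimpleGraph.Walk.length_map, hw0]
      have h3 := distsm (γ ^ a) x₀ (γ ^ (b - a) • x₀)
      rw [hend] at h3
      exact h3.symm
    · intro v hv
      rw [SimpleGraph.Walk.support_copy, SimpleGraph.Walk.support_map, List.mem_map] at hv
      obtain ⟨v', hv', rfl⟩ := hv
      obtain ⟨j, hj1, hj2, hj3⟩ := (hμ (b - a) w0 hw0).1 v' hv'
      rw [min_eq_left (by linarith : (0:ℤ) ≤ b - a)] at hj1
      rw [max_eq_right (by linarith : (0:ℤ) ≤ b - a)] at hj2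
      refine ⟨a + j, by linarith, by linarith, ?_⟩
      rw [ghom_apply, ← hz a j, distsm]
      exact hj3
  -- Claim B : apexes with large modified projection onto points near the orbit
  -- are themselves near the orbit
  have claimB : ∀ (a b : ℤ), a ≤ b → ∀ P Q s : Y,
      (X.dist P (γ ^ a • x₀) : ℝ) ≤ ρb → (X.dist Q (γ ^ b • x₀) : ℝ) ≤ ρb →
      S.col P = S.col s → S.col Q = S.col s → P ≠ s → Q ≠ s →
      C < S.dmod s P Q →
      ∃ k : ℤ, a ≤ k ∧ k ≤ b ∧ (X.dist s (γ ^ k • x₀) : ℝ) ≤ μh := by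
    intro a b hab P Q s hP hQ hcP hcQ hPs hQs hbig
    obtain ⟨w₀, hw₀⟩ := hconn.exists_walk_length_eq_dist P Q
    obtain ⟨v, hvmem, hv1⟩ := hbgit s P Q hcP hcQ hPs hQs hbig w₀ hw₀
    obtain ⟨w₂, hw₂⟩ := hconn.exists_walk_length_eq_dist Q (γ ^ a • x₀)
    obtain ⟨w₃, hw₃⟩ := hconn.exists_walk_length_eq_dist P (γ ^ a • x₀)
    obtain ⟨u₁, hu₁mem, hu₁⟩ := hslim P Q (γ ^ a • x₀) w₀ w₂ w₃ hw₀ hw₂ hw₃ v hvmem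
    have hsv : (X.dist s v : ℝ) = 1 := by
      rw [symR s v]; exact_mod_cast hv1
    rcases hu₁mem with h₂ | h₃
    · -- u₁ on a geodesic from Q to γ^a x₀ ; second triangle
      obtain ⟨wO, hwOgeo, hwOμ⟩ := geo_orbit a b hab
      obtain ⟨w₄, hw₄⟩ := hconn.exists_walk_length_eq_dist Q (γ ^ b • x₀)
      obtain ⟨u₂, hu₂mem, hu₂⟩ := hslim Q (γ ^ a • x₀) (γ ^ b • x₀) w₂ wO w₄ hw₂ hwOgeo hw₄ u₁ h₂
      rcases hu₂mem with hO | h₄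
      · obtain ⟨j, hj1, hj2, hj3⟩ := hwOμ u₂ hO
        refine ⟨j, hj1, hj2, ?_⟩
        calc (X.dist s (γ ^ j • x₀) : ℝ)
            ≤ (X.dist s v : ℝ) + (X.dist v (γ ^ j • x₀) : ℝ) := triR _ _ _
          _ ≤ (X.dist s v : ℝ) + ((X.dist v u₁ : ℝ) + (X.dist u₁ (γ ^ j • x₀) : ℝ)) := by
              have := triR v u₁ (γ ^ j • x₀); linarith
          _ ≤ (X.dist s v : ℝ) + ((X.dist v u₁ : ℝ) + ((X.dist u₁ u₂ : ℝ) + (X.dist u₂ (γ ^ j • x₀) : ℝ))) := by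
              have := triR u₁ u₂ (γ ^ j • x₀); linarith
          _ ≤ 1 + (δ + (δ + μ)) := by
              rw [hsv]; gcongr
          _ ≤ μh := by simp only [hμhdef]; linarith
      · -- u₂ near the endpoint γ^b x₀
        have hd4 : (X.dist u₂ (γ ^ b • x₀) : ℝ) ≤ ρb := by
          have h5 : X.dist u₂ (γ ^ b • x₀) ≤ w₄.length := bp_dist_end_le w₄ h₄
          have h6 : (w₄.length : ℝ) = (X.dist Q (γ ^ b • x₀) : ℝ) := by exact_mod_cast hw₄
          calc (X.dist u₂ (γ ^ b • x₀) : ℝ) ≤ (w₄.length : ℝ) := by exact_mod_cast h5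
            _ ≤ ρb := by rw [h6]; exact hQ
        refine ⟨b, hab, le_refl _, ?_⟩
        calc (X.dist s (γ ^ b • x₀) : ℝ)
            ≤ (X.dist s v : ℝ) + (X.dist v (γ ^ b • x₀) : ℝ) := triR _ _ _
          _ ≤ (X.dist s v : ℝ) + ((X.dist v u₁ : ℝ) + ((X.dist u₁ u₂ : ℝ) + (X.dist u₂ (γ ^ b • x₀) : ℝ))) := by
              have h7 := triR v u₁ (γ ^ b • x₀)
              have h8 := triR u₁ u₂ (γ ^ b • x₀)
              linarith
          _ ≤ 1 + (δ + (δ + ρb)) := by rw [hsv]; gcongr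
          _ ≤ μh := by simp only [hμhdef]; linarith
    · -- u₁ near the endpoint γ^a x₀
      have hd3 : (X.dist u₁ (γ ^ a • x₀) : ℝ) ≤ ρb := by
        have h5 : X.dist u₁ (γ ^ a • x₀) ≤ w₃.length := bp_dist_end_le w₃ h₃
        have h6 : (w₃.length : ℝ) = (X.dist P (γ ^ a • x₀) : ℝ) := by exact_mod_cast hw₃
        calc (X.dist u₁ (γ ^ a • x₀) : ℝ) ≤ (w₃.length : ℝ) := by exact_mod_cast h5
          _ ≤ ρb := by rw [h6]; exact hP
      refine ⟨a, le_refl _, hab, ?_⟩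
      calc (X.dist s (γ ^ a • x₀) : ℝ)
          ≤ (X.dist s v : ℝ) + ((X.dist v u₁ : ℝ) + (X.dist u₁ (γ ^ a • x₀) : ℝ)) := by
            have h7 := triR s v (γ ^ a • x₀)
            have h8 := triR v u₁ (γ ^ a • x₀)
            linarith
        _ ≤ 1 + (δ + ρb) := by rw [hsv]; gcongr
        _ ≤ μh := by simp only [hμhdef]; linarith
  -- Lemma E : degenerate projections are bounded
  have lemE : ∀ s v : Y, S.col v = S.col s → v ≠ s → S.dmod s v v ≤ C := by
    intro s v hc hne
    by_contra hgt
    push_neg at hgt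
    have hnil : IsGeodesic X (SimpleGraph.Walk.nil : X.Walk v v) := by
      show _ = _
      simp [SimpleGraph.dist_self]
    obtain ⟨u, hu, hu1⟩ := hbgit s v v hc hc hne hne hgt SimpleGraph.Walk.nil hnil
    have huv : u = v := by simpa using hu
    subst huv
    have hadj : X.Adj u s := SimpleGraph.dist_eq_one_iff_adj.mp hu1
    have huAct : u ∈ S.Act s := S.act_piece u s hc
    have hfin := R.proper_isotropy (S.dang s u u + 1) s u huAct hne
    refine (((R.infinite s).mono ?_) hfin)
    intro g hg
    refine ⟨hg, ?_⟩
    rw [hfix s u hadj g hg]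
    linarith
    -- uniform bound for pairs of bounded-gap translates, by properness of dmod
  set K2 : ℤ := ⌈(2*μh)/lam⌉ + 2 with hK2def
  have hK2pos : 0 ≤ K2 := by
    have h1 : (0:ℝ) ≤ 2*μh/lam := by positivity
    have h2 : (0:ℤ) ≤ ⌈(2*μh)/lam⌉ := Int.ceil_nonneg h1
    omega
  have propS : ∀ v w : Y, ∃ M : ℝ, S.col v = S.col w → v ≠ w →
      ∀ y, S.col y = S.col v → y ≠ v → y ≠ w → S.dmod y v w ≤ M := by
    intro v w
    by_cases h : S.col v = S.col w ∧ v ≠ w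
    · obtain ⟨M, hM⟩ := S.propSup v w h.1 h.2
      exact ⟨M, fun _ _ => hM⟩
    · exact ⟨0, fun h1 h2 => absurd ⟨h1, h2⟩ h⟩
  choose Mf hMf using propS
  have hB1 : ∃ B1 : ℝ, ∀ (d : ℤ) (u u' : Y), u ∈ Tf → u' ∈ Tf → 0 ≤ d → d ≤ K2 →
      ∀ s' : Y, S.col u = S.col s' → S.col (γ ^ d • u') = S.col s' → u ≠ s' → γ ^ d • u' ≠ s' →
      S.dmod s' u (γ ^ d • u') ≤ B1 := by
    have hne : (((x₀, x₀), (0:ℤ)) : (Y × Y) × ℤ) ∈ (Tf ×ˢ Tf) ×ˢ Finset.Icc (0:ℤ) K2 := by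
      simp only [Finset.mem_product, Finset.mem_Icc]
      exact ⟨⟨hx₀Tf, hx₀Tf⟩, le_refl _, hK2pos⟩
    refine ⟨((Tf ×ˢ Tf) ×ˢ Finset.Icc (0:ℤ) K2).sup' ⟨_, hne⟩
      (fun p => max C (Mf p.1.1 (γ ^ p.2 • p.1.2))), ?_⟩
    intro d u u' hu hu' hd0 hdK s' hcu hcu' hus hu's
    have hmem : (((u, u'), d) : (Y × Y) × ℤ) ∈ (Tf ×ˢ Tf) ×ˢ Finset.Icc (0:ℤ) K2 := by
      simp only [Finset.mem_product, Finset.mem_Icc]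
      exact ⟨⟨hu, hu'⟩, hd0, hdK⟩
    have hle := Finset.le_sup' (fun p : (Y × Y) × ℤ => max C (Mf p.1.1 (γ ^ p.2 • p.1.2))) hmem
    simp only at hle
    by_cases heq : u = γ ^ d • u'
    · refine le_trans ?_ (le_trans (le_max_left _ _) hle)
      rw [← heq]
      exact lemE s' u hcu hus
    · have hcvw : S.col u = S.col (γ ^ d • u') := hcu.trans hcu'.symm
      have h2 := hMf u (γ ^ d • u') hcvw heq s' hcu.symm (Ne.symm hus) (Ne.symm hu's)
      exact h2.trans (le_trans (le_max_right _ _) hle)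
  obtain ⟨B1, hB1⟩ := hB1
  set B2 : ℝ := max C B1 with hB2def
  have hB2C : C ≤ B2 := le_max_left _ _
  have hB2B1 : B1 ≤ B2 := le_max_right _ _
  have hB2nonneg : 0 ≤ B2 := le_trans hC.le hB2C
  have hκ := S.kappa_pos
  set LA0 : ℝ := 3 * B2 + 2 * S.kappa with hLA0def
  -- Lemma A (ordered, based at 0) : projections of translated pairs are uniformly bounded
  have lemA0 : ∀ (n : ℤ), 0 ≤ n → ∀ u u' : Y, u ∈ Tf → u' ∈ Tf → ∀ s : Y,
      S.col u = S.col s → S.col (γ ^ n • u') = S.col s → u ≠ s → γ ^ n • u' ≠ s →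
      S.dmod s u (γ ^ n • u') ≤ LA0 := by
    intro n hn u u' hu hu' s hc1 hc2 hne1 hne2
    set q : Y := γ ^ n • u' with hqdef
    set I : Finset ℤ := (Finset.Icc 0 n).filter (fun k => (X.dist s (γ ^ k • x₀) : ℝ) ≤ μh)
      with hIdef
    have hmemI : ∀ k : ℤ, k ∈ I ↔ (0 ≤ k ∧ k ≤ n ∧ (X.dist s (γ ^ k • x₀) : ℝ) ≤ μh) := by
      intro k
      simp only [hIdef, Finset.mem_filter, Finset.mem_Icc, and_assoc]
    have hdu : (X.dist u (γ ^ (0:ℤ) • x₀) : ℝ) ≤ ρb := by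
      rw [zpow_zero, one_smul]; exact hρ u hu
    have hdq : (X.dist q (γ ^ n • x₀) : ℝ) ≤ ρb := by
      rw [hqdef, distsm]; exact hρ u' hu'
    by_cases hI : I.Nonempty
    · set j₀ : ℤ := I.min' hI with hj₀def
      set j₁ : ℤ := I.max' hI with hj₁def
      have hj₀I : j₀ ∈ I := I.min'_mem hI
      have hj₁I : j₁ ∈ I := I.max'_mem hI
      obtain ⟨hj₀0, hj₀n, hj₀d⟩ := (hmemI j₀).mp hj₀I
      obtain ⟨hj₁0, hj₁n, hj₁d⟩ := (hmemI j₁).mp hj₁I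
      have hj₀j₁ : j₀ ≤ j₁ := I.min'_le j₁ hj₁I
      have hgap : j₁ - j₀ ≤ K2 - 2 := by
        have h1 := orbd j₀ j₁
        have t1 := triR (γ ^ j₀ • x₀) s (γ ^ j₁ • x₀)
        have e1 : (X.dist (γ ^ j₀ • x₀) s : ℝ) ≤ μh := by rw [symR]; exact hj₀d
        have habs : |(j₁:ℝ) - (j₀:ℝ)| = (j₁:ℝ) - (j₀:ℝ) := by
          rw [abs_of_nonneg]; simp only [sub_nonneg]; exact_mod_cast hj₀j₁
        have h2 : lam * ((j₁:ℝ) - (j₀:ℝ)) ≤ 2 * μh := by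
          rw [← habs]; linarith
        have h3 : (j₁:ℝ) - (j₀:ℝ) ≤ 2*μh/lam := by
          rw [le_div_iff₀ hlam]; linarith
        have h4 : ((j₁ - j₀ : ℤ) : ℝ) ≤ (⌈(2*μh)/lam⌉ : ℝ) := by
          push_cast
          exact h3.trans (Int.le_ceil _)
        have h5 : j₁ - j₀ ≤ ⌈(2*μh)/lam⌉ := by exact_mod_cast h4
        omega
      set a : ℤ := max 0 (j₀ - 1) with hadef
      set b : ℤ := min n (j₁ + 1) with hbdef
      have ha0 : 0 ≤ a := le_max_left _ _
      have haj₀ : a ≤ j₀ := max_le hj₀0 (by omega)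
      have han : a ≤ n := le_trans haj₀ hj₀n
      have hbj₁ : j₁ ≤ b := le_min hj₁n (by omega)
      have hbn : b ≤ n := min_le_left _ _
      have hab : a ≤ b := le_trans haj₀ (le_trans hj₀j₁ hbj₁)
      have hba : b - a ≤ K2 := by
        have h1 : b ≤ j₁ + 1 := min_le_right _ _
        have h2 : j₀ - 1 ≤ a := le_max_right _ _
        omega
      have haval : a ≠ 0 → a = j₀ - 1 := by
        intro h
        rcases max_choice 0 (j₀ - 1) with h1 | h1
        · exact absurd (hadef.trans h1) h
        · exact hadef.trans h1
      have hbval : b ≠ n → b = j₁ + 1 := by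
        intro h
        rcases min_choice n (j₁ + 1) with h1 | h1
        · exact absurd (hbdef.trans h1) h
        · exact hbdef.trans h1
      set cA : Y := if a = 0 then u else γ ^ a • tp (S.col (γ ^ (-a) • s)) with hcAdef
      set cB : Y := if b = n then q else γ ^ b • tp (S.col (γ ^ (-b) • s)) with hcBdef
      have hcArep : ∃ uA ∈ Tf, cA = γ ^ a • uA := by
        by_cases h : a = 0
        · refine ⟨u, hu, ?_⟩
          rw [hcAdef, if_pos h, h, zpow_zero, one_smul]
        · exact ⟨tp (S.col (γ ^ (-a) • s)), htpTf _, by rw [hcAdef, if_neg h]⟩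
      have hcBrep : ∃ uB ∈ Tf, cB = γ ^ b • uB := by
        by_cases h : b = n
        · refine ⟨u', hu', ?_⟩
          rw [hcBdef, if_pos h, hqdef, h]
        · exact ⟨tp (S.col (γ ^ (-b) • s)), htpTf _, by rw [hcBdef, if_neg h]⟩
      have hcolA : S.col cA = S.col s := by
        by_cases h : a = 0
        · rw [hcAdef, if_pos h]; exact hc1
        · rw [hcAdef, if_neg h]
          have e1 : S.col (tp (S.col (γ ^ (-a) • s))) = S.col (γ ^ (-a) • s) :=
            (tps (S.col (γ ^ (-a) • s))).1
          have e2 := S.smul_col (γ ^ a) _ _ e1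
          rwa [hzc] at e2
      have hcolB : S.col cB = S.col s := by
        by_cases h : b = n
        · rw [hcBdef, if_pos h]; exact hc2
        · rw [hcBdef, if_neg h]
          have e1 : S.col (tp (S.col (γ ^ (-b) • s))) = S.col (γ ^ (-b) • s) :=
            (tps (S.col (γ ^ (-b) • s))).1
          have e2 := S.smul_col (γ ^ b) _ _ e1
          rwa [hzc] at e2
      have hdA : (X.dist cA (γ ^ a • x₀) : ℝ) ≤ ρb := by
        by_cases h : a = 0
        · rw [hcAdef, if_pos h, h]; exact hdu
        · rw [hcAdef, if_neg h, distsm]; exact hρ _ (htpTf _)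
      have hdB : (X.dist cB (γ ^ b • x₀) : ℝ) ≤ ρb := by
        by_cases h : b = n
        · rw [hcBdef, if_pos h, h]; exact hdq
        · rw [hcBdef, if_neg h, distsm]; exact hρ _ (htpTf _)
      have hAs : cA ≠ s := by
        by_cases h : a = 0
        · rw [hcAdef, if_pos h]; exact hne1
        · intro heq
          have haI : a ∈ I := by
            refine (hmemI a).mpr ⟨ha0, han, ?_⟩
            calc (X.dist s (γ ^ a • x₀) : ℝ) = (X.dist cA (γ ^ a • x₀) : ℝ) := by rw [heq]
              _ ≤ ρb := hdA
              _ ≤ μh := by linarith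
          have := I.min'_le a haI
          have := haval h
          omega
      have hBs : cB ≠ s := by
        by_cases h : b = n
        · rw [hcBdef, if_pos h]; exact hne2
        · intro heq
          have hbI : b ∈ I := by
            refine (hmemI b).mpr ⟨by omega, hbn, ?_⟩
            calc (X.dist s (γ ^ b • x₀) : ℝ) = (X.dist cB (γ ^ b • x₀) : ℝ) := by rw [heq]
              _ ≤ ρb := hdB
              _ ≤ μh := by linarith
          have := I.le_max' b hbI
          have := hbval h
          omega
      have F1 : S.dmod s u cA ≤ B2 := by
        by_cases h : a = 0
        · have hAu : cA = u := by rw [hcAdef, if_pos h]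
          rw [hAu]
          exact (lemE s u hc1 hne1).trans hB2C
        · by_contra hgt
          push_neg at hgt
          obtain ⟨k, hk1, hk2, hk3⟩ := claimB 0 a ha0 u cA s hdu hdA hc1 hcolA hne1 hAs
            (lt_of_le_of_lt hB2C hgt)
          have hkI : k ∈ I := (hmemI k).mpr ⟨hk1, by omega, hk3⟩
          have := I.min'_le k hkI
          have := haval h
          omega
      have F3 : S.dmod s cB q ≤ B2 := by
        by_cases h : b = n
        · have hBq : cB = q := by rw [hcBdef, if_pos h]
          rw [hBq]
          exact (lemE s q hc2 hne2).trans hB2C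
        · by_contra hgt
          push_neg at hgt
          obtain ⟨k, hk1, hk2, hk3⟩ := claimB b n hbn cB q s hdB hdq hcolB hc2 hBs hne2
            (lt_of_le_of_lt hB2C hgt)
          have hkI : k ∈ I := (hmemI k).mpr ⟨by omega, hk2, hk3⟩
          have := I.le_max' k hkI
          have := hbval h
          omega
      have F2 : S.dmod s cA cB ≤ B2 := by
        by_cases hAB : cA = cB
        · rw [hAB]
          exact (lemE s cB hcolB hBs).trans hB2C
        · obtain ⟨uA, huA, hrepA⟩ := hcArep
          obtain ⟨uB, huB, hrepB⟩ := hcBrep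
          rw [hrepA] at hcolA hAs ⊢
          rw [hrepB] at hcolB hBs ⊢
          have h1 := S.trdmod (γ ^ (-a)) s (γ ^ a • uA) (γ ^ b • uB) hcolA hcolB hAs hBs
          rw [hz, hz, show -a + a = 0 by ring, show -a + b = b - a by ring,
            zpow_zero, one_smul] at h1
          rw [← h1]
          have hcu : S.col uA = S.col (γ ^ (-a) • s) := by
            have e1 := S.smul_col (γ ^ (-a)) _ _ hcolA
            rwa [hzc'] at e1
          have hcu' : S.col (γ ^ (b - a) • uB) = S.col (γ ^ (-a) • s) := by
            have e1 := S.smul_col (γ ^ (-a)) _ _ hcolB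
            rwa [hz, show -a + b = b - a by ring] at e1
          have hne1' : uA ≠ γ ^ (-a) • s := by
            intro h
            apply hAs
            rw [h, hzc]
          have hne2' : γ ^ (b - a) • uB ≠ γ ^ (-a) • s := by
            intro h
            apply hBs
            have h2 := congrArg (fun y => γ ^ a • y) h
            rw [hz, hz, show a + (b - a) = b by ring, show a + -a = 0 by ring,
              zpow_zero, one_smul] at h2
            rw [h2]
          exact (hB1 (b - a) uA uB huA huB (by omega) hba (γ ^ (-a) • s)
            hcu hcu' hne1' hne2').trans hB2B1
      -- assemble
      rw [hLA0def]
      by_cases h1 : u = q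
      · rw [← h1] at hne2 ⊢
        have := lemE s u hc1 hne1
        linarith
      · by_cases h2 : cA = q
        · rw [← h2]
          linarith [F1]
        · by_cases h3 : cB = u
          · have : S.dmod s u q = S.dmod s cB q := by rw [h3]
            rw [this]
            linarith [F3]
          · by_cases h5 : cB = q
            · by_cases h4 : cA = u
              · have e : S.dmod s u q = S.dmod s cA cB := by rw [h4, h5]
                rw [e]; linarith [F2]
              · have t := S.dmod_tri s u q cA hc1 hc2 hcolA hne1 hne2 hAs h1
                  (Ne.symm h4) (Ne.symm h2)
                have e : S.dmod s q cA = S.dmod s cA cB := by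
                  rw [S.dmod_symm s q cA hc2 hcolA hne2 hAs, h5]
                rw [e] at t
                linarith [F1, F2]
            · by_cases h4 : cA = u
              · have t := S.dmod_tri s u q cB hc1 hc2 hcolB hne1 hne2 hBs h1
                  (Ne.symm h3) (Ne.symm h5)
                have e1 : S.dmod s u cB = S.dmod s cA cB := by rw [h4]
                have e2 : S.dmod s q cB = S.dmod s cB q :=
                  S.dmod_symm s q cB hc2 hcolB hne2 hBs
                rw [e1, e2] at t
                linarith [F2, F3]
              · by_cases h6 : cA = cB
                · have t := S.dmod_tri s u q cA hc1 hc2 hcolA hne1 hne2 hAs h1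
                    (Ne.symm h4) (Ne.symm h2)
                  have e : S.dmod s q cA = S.dmod s cB q := by
                    rw [S.dmod_symm s q cA hc2 hcolA hne2 hAs, h6]
                  rw [e] at t
                  linarith [F1, F3]
                · have t1 := S.dmod_tri s u q cA hc1 hc2 hcolA hne1 hne2 hAs h1
                    (Ne.symm h4) (Ne.symm h2)
                  have t2 := S.dmod_tri s cA q cB hcolA hc2 hcolB hAs hne2 hBs h2 h6
                    (Ne.symm h5)
                  have e1 : S.dmod s q cA = S.dmod s cA q :=
                    S.dmod_symm s q cA hc2 hcolA hne2 hAs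
                  have e2 : S.dmod s q cB = S.dmod s cB q :=
                    S.dmod_symm s q cB hc2 hcolB hne2 hBs
                  rw [e1] at t1
                  rw [e2] at t2
                  linarith [F1, F2, F3]
    · -- I empty : the whole geodesic avoids the apex
      by_contra hgt
      push_neg at hgt
      obtain ⟨k, hk1, hk2, hk3⟩ := claimB 0 n hn u q s hdu hdq hc1 hc2 hne1 hne2
        (by
          have : C ≤ LA0 := by rw [hLA0def]; linarith
          linarith)
      exact hI ⟨k, (hmemI k).mpr ⟨hk1, hk2, hk3⟩⟩
  -- Lemma A, general version
  have lemA : ∀ (aexp bexp : ℤ) (u u' : Y), u ∈ Tf → u' ∈ Tf → ∀ s : Y,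
      S.col (γ ^ aexp • u) = S.col s → S.col (γ ^ bexp • u') = S.col s →
      γ ^ aexp • u ≠ s → γ ^ bexp • u' ≠ s →
      S.dmod s (γ ^ aexp • u) (γ ^ bexp • u') ≤ LA0 := by
    have hordered : ∀ (a0 b0 : ℤ), a0 ≤ b0 → ∀ (u u' : Y), u ∈ Tf → u' ∈ Tf → ∀ s : Y,
        S.col (γ ^ a0 • u) = S.col s → S.col (γ ^ b0 • u') = S.col s →
        γ ^ a0 • u ≠ s → γ ^ b0 • u' ≠ s →
        S.dmod s (γ ^ a0 • u) (γ ^ b0 • u') ≤ LA0 := by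
      intro a0 b0 hab u u' hu hu' s hc1 hc2 hne1 hne2
      have h1 := S.trdmod (γ ^ (-a0)) s (γ ^ a0 • u) (γ ^ b0 • u') hc1 hc2 hne1 hne2
      rw [hz, hz, show -a0 + a0 = 0 by ring, show -a0 + b0 = b0 - a0 by ring,
        zpow_zero, one_smul] at h1
      rw [← h1]
      refine lemA0 (b0 - a0) (by omega) u u' hu hu' (γ ^ (-a0) • s) ?_ ?_ ?_ ?_
      · have e1 := S.smul_col (γ ^ (-a0)) _ _ hc1
        rwa [hzc'] at e1
      · have e1 := S.smul_col (γ ^ (-a0)) _ _ hc2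
        rwa [hz, show -a0 + b0 = b0 - a0 by ring] at e1
      · intro h
        apply hne1
        rw [h, hzc]
      · intro h
        apply hne2
        have := congrArg (fun y => γ ^ a0 • y) h
        rw [hz, hz, show a0 + (b0 - a0) = b0 by ring, show a0 + -a0 = 0 by ring,
          zpow_zero, one_smul] at this
        rw [this]
    intro a0 b0 u u' hu hu' s hc1 hc2 hne1 hne2
    rcases le_or_gt a0 b0 with h | h
    · exact hordered a0 b0 h u u' hu hu' s hc1 hc2 hne1 hne2
    · rw [S.dmod_symm s _ _ hc1 hc2 hne1 hne2]
      exact hordered b0 a0 h.le u' u hu' hu s hc2 hc1 hne2 hne1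
  
  -- selection of good rotating elements for transfer hops
  have sideSel : ∀ (y' : Y), y' ∈ S.Act x₀ → y' ≠ x₀ → ∃ g : G, g ∈ R.Γ x₀ ∧
      (∀ y : Y, S.col (g • y) = S.col y) ∧
      S.dang y' x₀ (g • tp (S.col y')) ≤ S.kappa ∧ g • tp (S.col y') ≠ y' := by
    intro y' hy' hy'ne
    have bad1 := (tps (S.col y')).2.2.1 y' rfl hy'
    have bad2 := R.G1' x₀ (tp (S.col y')) y' hy' hy'ne
    obtain ⟨g, hg⟩ := ((R.G2 x₀).diff (bad1.union bad2)).nonempty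
    obtain ⟨⟨hgΓ, hgcol⟩, hgbad⟩ := hg
    rw [Set.mem_union] at hgbad
    refine ⟨g, hgΓ, hgcol, ?_, ?_⟩
    · by_contra hcon
      exact hgbad (Or.inl ⟨hgΓ, hcon⟩)
    · intro hcon
      exact hgbad (Or.inr ⟨hgΓ, hcon⟩)
  have hθpos := S.theta_pos
  have hΘpos := S.Theta_pos
  have hTh0pos : 0 < S.Th0 := by
    have h : S.Th0 = 2 * S.Theta + 3 * S.kappa := rfl
    rw [h]; linarith
  set h1b : ℝ := max S.theta (2 * S.kappa) with hh1bdef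
  set h2b : ℝ := max S.theta (S.Th0 + S.kappa) with hh2bdef
  set h3b : ℝ := max S.theta (LA0 + S.kappa) with hh3bdef
  have hh1b0 : 0 < h1b := lt_of_lt_of_le hθpos (le_max_left _ _)
  have hh2b0 : 0 < h2b := lt_of_lt_of_le hθpos (le_max_left _ _)
  have hh3b0 : 0 < h3b := lt_of_lt_of_le hθpos (le_max_left _ _)
  set Lchain : ℝ := h1b + h2b + h3b + h2b + h1b with hLchaindef
  -- the z-side transfer subchain
  have zside : ∀ (n : ℤ) (s : Y), γ ^ n • x₀ ∈ S.Act s → γ ^ n • x₀ ≠ s →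
      γ ^ n • tp (S.col (γ ^ (-n) • s)) ≠ s →
      S.col (γ ^ n • tp (S.col (γ ^ (-n) • s))) = S.col s ∧
      S.dpi s (γ ^ n • tp (S.col (γ ^ (-n) • s))) (γ ^ n • x₀) ≤ h2b + h1b := by
    intro n s hznA hzns hts
    have hsz : s ∈ S.Act (γ ^ n • x₀) := (S.act_symm (γ ^ n • x₀) s).mp hznA
    have hy'A : γ ^ (-n) • s ∈ S.Act x₀ := by
      have h := S.smul_act (γ ^ (-n)) s (γ ^ n • x₀) hsz
      rwa [hzc'] at h
    have hy'ne : γ ^ (-n) • s ≠ x₀ := by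
      intro h
      apply hzns
      have h2 := congrArg (fun w => γ ^ n • w) h
      rw [hzc] at h2
      exact h2.symm
    obtain ⟨g2, hg2Γ, hg2col, hg2κ, hg2ne⟩ := sideSel (γ ^ (-n) • s) hy'A hy'ne
    set y' : Y := γ ^ (-n) • s with hy'def
    set t' : Y := tp (S.col y') with ht'def
    have hcolt' : S.col t' = S.col y' := (tps (S.col y')).1
    set b : Y := γ ^ n • (g2 • t') with hbdef
    have hg2t'col : S.col (g2 • t') = S.col y' := by rw [hg2col]; exact hcolt'
    have hg2t'A : g2 • t' ∈ S.Act y' := S.act_piece _ _ hg2t'col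
    have ht'A : t' ∈ S.Act y' := S.act_piece _ _ hcolt'
    have hx₀y'A : x₀ ∈ S.Act y' := (S.act_symm y' x₀).mp hy'A
    have hx₀y'ne : x₀ ≠ y' := Ne.symm hy'ne
    have htn'ne : t' ≠ y' := by
      intro h
      apply hts
      rw [h, hy'def, hzc]
    have hbs : b ≠ s := by
      intro h
      apply hg2ne
      have h2 := congrArg (fun w => γ ^ (-n) • w) h
      rw [hbdef, hzc'] at h2
      rw [h2, hy'def]
    have hcolb : S.col b = S.col s := by
      have e1 : S.col (γ ^ n • (g2 • t')) = S.col (γ ^ n • y') := S.smul_col _ _ _ hg2t'col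
      rw [hy'def, hzc] at e1
      exact e1
    have hbA : b ∈ S.Act s := S.act_piece _ _ hcolb
    have hcoltn' : S.col (γ ^ n • t') = S.col s := by
      have e1 := S.smul_col (γ ^ n) _ _ hcolt'
      rwa [hy'def, hzc] at e1
    have htn'A : γ ^ n • t' ∈ S.Act s := S.act_piece _ _ hcoltn'
    have htn's : γ ^ n • t' ≠ s := hts
    refine ⟨hcoltn', ?_⟩
    have h5v : S.dang s (γ ^ n • x₀) b ≤ S.kappa := by
      have heq := S.dang_smul (γ ^ n) y' x₀ (g2 • t') hx₀y'A hg2t'A hx₀y'ne hg2ne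
      rw [hy'def, hzc] at heq
      rw [hbdef]
      exact heq.trans_le hg2κ
    have H5 : S.dpi s b (γ ^ n • x₀) ≤ h1b := by
      have h5' := S.hopconv2 s (γ ^ n • x₀) b hznA hbA hzns hbs hcolb h5v
      rwa [S.dpi_symm s (γ ^ n • x₀) b hznA hbA hzns hbs] at h5'
    have h4base : S.dang y' (g2 • t') t' ≤ S.Th0 :=
      (tps (S.col y')).2.1 g2 hg2Γ y' rfl ⟨hg2t'A, ht'A, hg2ne, htn'ne⟩
    have h4v : S.dang s b (γ ^ n • t') ≤ S.Th0 := by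
      have heq := S.dang_smul (γ ^ n) y' (g2 • t') t' hg2t'A ht'A hg2ne htn'ne
      rw [hy'def, hzc] at heq
      rw [hbdef]
      exact heq.trans_le h4base
    have H4 : S.dpi s (γ ^ n • t') b ≤ h2b := by
      have hmod : S.dmod s (γ ^ n • t') b ≤ S.Th0 := by
        have e1 : S.dang s b (γ ^ n • t') = S.dmod s b (γ ^ n • t') := S.dangD hcolb hcoltn'
        have e2 := S.dmod_symm s b (γ ^ n • t') hcolb hcoltn' hbs htn's
        rw [e1, e2] at h4v
        exact h4v
      exact S.hopconv s (γ ^ n • t') b htn'A htn's hbs hcoltn' hcolb S.Th0 hmod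
    have T4 := S.dpi_tri s (γ ^ n • t') (γ ^ n • x₀) b htn'A hznA hbA htn's hzns hbs
    linarith
  -- the full transfer chain, for non-special apexes
  have lemChain : ∀ (n : ℤ) (s : Y), S.Dfnd s x₀ (γ ^ n • x₀) →
      tp (S.col s) ≠ s → γ ^ n • tp (S.col (γ ^ (-n) • s)) ≠ s →
      S.dpi s x₀ (γ ^ n • x₀) ≤ Lchain := by
    intro n s hDf ht hts
    obtain ⟨hx₀A, hznA, hx₀s, hzns⟩ := hDf
    obtain ⟨hcoltn', hZ⟩ := zside n s hznA hzns hts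
    have hsx₀ : s ∈ S.Act x₀ := (S.act_symm x₀ s).mp hx₀A
    obtain ⟨g1, hg1Γ, hg1col, hg1κ, hg1ne⟩ := sideSel s hsx₀ (Ne.symm hx₀s)
    set t : Y := tp (S.col s) with htdef
    have hcolt : S.col t = S.col s := (tps (S.col s)).1
    have htA : t ∈ S.Act s := S.act_piece _ _ hcolt
    set a : Y := g1 • t with hadef
    have hcola : S.col a = S.col s := by rw [hadef, hg1col t]; exact hcolt
    have haA : a ∈ S.Act s := S.act_piece _ _ hcola
    have has : a ≠ s := hg1ne
    set tn' : Y := γ ^ n • tp (S.col (γ ^ (-n) • s)) with htn'def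
    have htn'A : tn' ∈ S.Act s := S.act_piece _ _ hcoltn'
    have H1 : S.dpi s x₀ a ≤ h1b := S.hopconv2 s x₀ a hx₀A haA hx₀s has hcola hg1κ
    have h2v : S.dang s a t ≤ S.Th0 := (tps (S.col s)).2.1 g1 hg1Γ s rfl ⟨haA, htA, has, ht⟩
    have H2 : S.dpi s a t ≤ h2b := by
      refine S.hopconv s a t haA has ht hcola hcolt S.Th0 ?_
      rw [← S.dangD hcola hcolt]
      exact h2v
    have H3 : S.dpi s t tn' ≤ h3b := by
      refine S.hopconv s t tn' htA ht hts hcolt hcoltn' LA0 ?_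
      have hA := lemA 0 n (tp (S.col s)) (tp (S.col (γ ^ (-n) • s))) (htpTf _) (htpTf _) s
        (by rw [zpow_zero, one_smul]; exact hcolt) hcoltn'
        (by rw [zpow_zero, one_smul]; exact ht) hts
      rwa [zpow_zero, one_smul] at hA
    have T1 := S.dpi_tri s x₀ (γ ^ n • x₀) a hx₀A hznA haA hx₀s hzns has
    have T2 := S.dpi_tri s a (γ ^ n • x₀) t haA hznA htA has hzns ht
    have T3 := S.dpi_tri s t (γ ^ n • x₀) tn' htA hznA htn'A ht hzns hts
    rw [hLchaindef]
    linarith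
  -- constants for the finitely many special apexes
  set K3 : ℤ := ⌈(2*ρb+1)/lam⌉ with hK3def
  have hK30 : 0 ≤ K3 := Int.ceil_nonneg (by positivity)
  have hlamK3 : 2*ρb + 1 ≤ lam * (K3:ℝ) := by
    have h1 := Int.le_ceil ((2*ρb+1)/lam)
    have h2 := mul_le_mul_of_nonneg_left h1 hlam.le
    have h3 : lam * ((2*ρb+1)/lam) = 2*ρb+1 := by field_simp
    rw [hK3def]
    rw [h3] at h2
    exact h2
  set ME : ℤ := ⌈(2*ρb)/lam⌉ with hMEdef
  have hME0 : 0 ≤ ME := Int.ceil_nonneg (by positivity)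
  have hMaxEne : ((x₀, (0:ℤ)) : Y × ℤ) ∈ Tf ×ˢ Finset.Icc (-ME) ME := by
    rw [Finset.mem_product, Finset.mem_Icc]
    exact ⟨hx₀Tf, by omega, hME0⟩
  set MaxE : ℝ := (Tf ×ˢ Finset.Icc (-ME) ME).sup' ⟨_, hMaxEne⟩
    (fun p => S.dang p.1 x₀ (γ ^ p.2 • x₀)) with hMaxEdef
  have hCstne : ((x₀, (0:ℤ)) : Y × ℤ) ∈ Tf ×ˢ Finset.Icc (0:ℤ) K3 := by
    rw [Finset.mem_product, Finset.mem_Icc]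
    exact ⟨hx₀Tf, le_refl _, hK30⟩
  set Cst : ℝ := (Tf ×ˢ Finset.Icc (0:ℤ) K3).sup' ⟨_, hCstne⟩
    (fun p => S.dpi p.1 x₀ (γ ^ p.2 • tp (S.col (γ ^ (-p.2) • p.1)))) with hCstdef
  have hCst0 : 0 ≤ Cst := by
    have h1 := Finset.le_sup'
      (fun p : Y × ℤ => S.dpi p.1 x₀ (γ ^ p.2 • tp (S.col (γ ^ (-p.2) • p.1)))) hCstne
    rw [hCstdef]
    exact le_trans (S.dpi_nonneg _ _ _) h1
  set LF : ℝ := max (max MaxE (Cst + Lchain)) (max LA0 S.theta) with hLFdef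
  have hLALF : LA0 ≤ LF := le_trans (le_max_left _ _) (le_max_right _ _)
  have hLchainLF : Lchain ≤ LF := by
    have h1 : Lchain ≤ Cst + Lchain := by linarith
    exact le_trans h1 (le_trans (le_max_right _ _) (le_max_left _ _))
  -- bounded projections onto the special apexes
  have lemF : ∀ σ ∈ Tf, ∀ mm : ℤ, S.Dfnd σ x₀ (γ ^ mm • x₀) →
      S.dang σ x₀ (γ ^ mm • x₀) ≤ LF := by
    intro σ hσ mm hDf
    obtain ⟨hx₀A, hznA, hx₀s, hzns⟩ := hDf
    by_cases hE : γ ^ mm • tp (S.col (γ ^ (-mm) • σ)) = σ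
    · -- σ is graph-close to the orbit point mm : boundedly many exceptional values
      have hd : (X.dist σ (γ ^ mm • x₀) : ℝ) ≤ ρb := by
        rw [← hE, distsm]
        exact hρ _ (htpTf _)
      have hdx : (X.dist x₀ σ : ℝ) ≤ ρb := by rw [symR]; exact hρ σ hσ
      have habs : lam * |(mm:ℝ)| ≤ 2*ρb := by
        have h1 := hlox mm
        have h2 := triR x₀ σ (γ ^ mm • x₀)
        linarith
      have hmmME : -ME ≤ mm ∧ mm ≤ ME := by
        have h3 : |(mm:ℝ)| ≤ 2*ρb/lam := by
          rw [le_div_iff₀ hlam]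
          linarith
        have h4 : |(mm:ℝ)| ≤ (ME:ℝ) := by
          rw [hMEdef]
          exact h3.trans (Int.le_ceil _)
        have h5 : |mm| ≤ ME := by exact_mod_cast h4
        exact abs_le.mp h5
      have hmem : (σ, mm) ∈ Tf ×ˢ Finset.Icc (-ME) ME := by
        rw [Finset.mem_product, Finset.mem_Icc]
        exact ⟨hσ, hmmME.1, hmmME.2⟩
      have h6 := Finset.le_sup' (fun p : Y × ℤ => S.dang p.1 x₀ (γ ^ p.2 • x₀)) hmem
      have h7 : S.dang σ x₀ (γ ^ mm • x₀) ≤ MaxE := by rw [hMaxEdef]; exact h6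
      exact h7.trans (le_trans (le_max_left _ _) (le_max_left _ _))
    · by_cases hbr : S.col x₀ = S.col σ ∧ S.col (γ ^ mm • x₀) = S.col σ
      · rw [S.dangD hbr.1 hbr.2]
        have hA := lemA 0 mm x₀ x₀ hx₀Tf hx₀Tf σ
          (by rw [zpow_zero, one_smul]; exact hbr.1) hbr.2
          (by rw [zpow_zero, one_smul]; exact hx₀s) hzns
        rw [zpow_zero, one_smul] at hA
        exact hA.trans hLALF
      · rw [S.dangP hbr]
        by_cases hts1 : tp (S.col σ) = σ
        · -- anchor chain for the special apex
          obtain ⟨hcoltn', hZ⟩ := zside mm σ hznA hzns hE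
          set tn' : Y := γ ^ mm • tp (S.col (γ ^ (-mm) • σ)) with htn'def
          have htn'A : tn' ∈ S.Act σ := S.act_piece _ _ hcoltn'
          set c : Y := γ ^ K3 • tp (S.col (γ ^ (-K3) • σ)) with hcdef
          have hcσ : c ≠ σ := by
            intro h
            have hd1 : (X.dist σ (γ ^ K3 • x₀) : ℝ) ≤ ρb := by
              rw [← h, hcdef, distsm]
              exact hρ _ (htpTf _)
            have hd0 : (X.dist x₀ σ : ℝ) ≤ ρb := by
              rw [symR]; exact hρ σ hσ
            have h1 := hlox K3
            have h2 := triR x₀ σ (γ ^ K3 • x₀)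
            have habs : |(K3:ℝ)| = (K3:ℝ) := abs_of_nonneg (by exact_mod_cast hK30)
            rw [habs] at h1
            linarith
          have hcolc : S.col c = S.col σ := by
            have e1 := S.smul_col (γ ^ K3) _ _ ((tps (S.col (γ ^ (-K3) • σ))).1)
            rwa [hzc] at e1
          have hcA : c ∈ S.Act σ := S.act_piece _ _ hcolc
          have hop0 : S.dpi σ x₀ c ≤ Cst := by
            have hmem2 : (σ, K3) ∈ Tf ×ˢ Finset.Icc (0:ℤ) K3 := by
              rw [Finset.mem_product, Finset.mem_Icc]
              exact ⟨hσ, hK30, le_refl _⟩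
            have h6 := Finset.le_sup'
              (fun p : Y × ℤ => S.dpi p.1 x₀ (γ ^ p.2 • tp (S.col (γ ^ (-p.2) • p.1)))) hmem2
            rw [hCstdef, hcdef]
            exact h6
          have Hmid : S.dpi σ c tn' ≤ h3b := by
            refine S.hopconv σ c tn' hcA hcσ hE hcolc hcoltn' LA0 ?_
            exact lemA K3 mm (tp (S.col (γ ^ (-K3) • σ))) (tp (S.col (γ ^ (-mm) • σ)))
              (htpTf _) (htpTf _) σ hcolc hcoltn' hcσ hE
          have T1 := S.dpi_tri σ x₀ (γ ^ mm • x₀) c hx₀A hznA hcA hx₀s hzns hcσ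
          have T2 := S.dpi_tri σ c (γ ^ mm • x₀) tn' hcA hznA htn'A hcσ hzns hE
          have hfinal : S.dpi σ x₀ (γ ^ mm • x₀) ≤ Cst + (h3b + (h2b + h1b)) := by
            linarith
          refine hfinal.trans ?_
          have h8 : Cst + (h3b + (h2b + h1b)) ≤ Cst + Lchain := by
            rw [hLchaindef]; linarith
          exact h8.trans (le_trans (le_max_right _ _) (le_max_left _ _))
        · exact (lemChain mm σ ⟨hx₀A, hznA, hx₀s, hzns⟩ hts1 hE).trans hLchainLF
  -- final assembly
  refine ⟨max LF Lchain, ?_⟩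
  intro n s hDf
  obtain ⟨hx₀A, hznA, hx₀s, hzns⟩ := hDf
  by_cases hbr : S.col x₀ = S.col s ∧ S.col (γ ^ n • x₀) = S.col s
  · rw [S.dangD hbr.1 hbr.2]
    have hA := lemA 0 n x₀ x₀ hx₀Tf hx₀Tf s
      (by rw [zpow_zero, one_smul]; exact hbr.1) hbr.2
      (by rw [zpow_zero, one_smul]; exact hx₀s) hzns
    rw [zpow_zero, one_smul] at hA
    exact hA.trans (le_trans hLALF (le_max_left _ _))
  · by_cases h1 : tp (S.col s) = s
    · have hσTf : s ∈ Tf := by rw [← h1]; exact htpTf _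
      exact (lemF s hσTf n ⟨hx₀A, hznA, hx₀s, hzns⟩).trans (le_max_left _ _)
    · by_cases h2 : γ ^ n • tp (S.col (γ ^ (-n) • s)) = s
      · have hσ'eq : tp (S.col (γ ^ (-n) • s)) = γ ^ (-n) • s := by
          have h3 := congrArg (fun w => γ ^ (-n) • w) h2
          rwa [hzc'] at h3
        have hσ'Tf : γ ^ (-n) • s ∈ Tf := by rw [← hσ'eq]; exact htpTf _
        have hm1 : x₀ ∈ S.Act (γ ^ (-n) • s) := by
          have h3 := S.smul_act (γ ^ (-n)) (γ ^ n • x₀) s hznA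
          rwa [hzc'] at h3
        have hm2 : γ ^ (-n) • x₀ ∈ S.Act (γ ^ (-n) • s) := S.smul_act (γ ^ (-n)) x₀ s hx₀A
        have hn1 : x₀ ≠ γ ^ (-n) • s := by
          intro h
          apply hzns
          have h3 := congrArg (fun w => γ ^ n • w) h
          rwa [hzc] at h3
        have hn2 : γ ^ (-n) • x₀ ≠ γ ^ (-n) • s := by
          intro h
          apply hx₀s
          have h3 := congrArg (fun w => γ ^ n • w) h
          rwa [hzc, hzc] at h3
        have hval : S.dang s x₀ (γ ^ n • x₀) = S.dang (γ ^ (-n) • s) x₀ (γ ^ (-n) • x₀) := by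
          have e1 := S.dang_symm_s12 s x₀ (γ ^ n • x₀) hx₀A hznA hx₀s hzns
          have e2 := S.dang_smul (γ ^ (-n)) s (γ ^ n • x₀) x₀ hznA hx₀A hzns hx₀s
          rw [hzc'] at e2
          rw [e1, ← e2]
        rw [hval]
        exact (lemF (γ ^ (-n) • s) hσ'Tf (-n) ⟨hm1, hm2, hn1, hn2⟩).trans (le_max_left _ _)
      · rw [S.dangP hbr]
        exact (lemChain n s ⟨hx₀A, hznA, hx₀s, hzns⟩ h1 h2).trans (le_max_right _ _)
end
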